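/- arXiv:2110.04557 — 4 statements merged into one kernel-verified Lean document; each statement's English description precedes it below -/
import Mathlib

section
/- For every z ∈ [0,1) the series G₁(z) = ∑_{j≥1} p(j) z^j is finite and satisfies ET·G₁(z)·(1 − λ·A(z)·(1−B(z))/(1−z)) = A(z)·z·(1−Ψ(z))/(1−z). (This is the generating-function identity obtained by multiplying the recursion for p(j) by z^j and summing over j ≥ 1.) -/
namespace Stmt0Aux

/-- tail of a series -/
noncomputable def bar (f : ℕ → ℝ) (k : ℕ) : ℝ := ∑' i, f (i + k + 1)

lemma sum_pow_summable {z : ℝ} {f : ℕ → ℝ} (hnn : ∀ i, 0 ≤ f i) (hf : Summable f)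
    (hz0 : 0 ≤ z) (hz1 : z < 1) : Summable (fun j => f j * z ^ j) :=
  hf.of_nonneg_of_le (fun j => mul_nonneg (hnn j) (pow_nonneg hz0 j))
    (fun j => by
      have h1 : z ^ j ≤ 1 := pow_le_one₀ hz0 hz1.le
      nlinarith [hnn j, pow_nonneg hz0 j])

lemma bar_summable {f : ℕ → ℝ} (hf : Summable f) (k : ℕ) :
    Summable (fun i => f (i + k + 1)) :=
  (summable_nat_add_iff (f := f) (k + 1)).2 hf

lemma bar_nonneg {f : ℕ → ℝ} (hnn : ∀ i, 0 ≤ f i) (k : ℕ) :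
    0 ≤ bar f k :=
  tsum_nonneg (fun _ => hnn _)

lemma bar_le_one {f : ℕ → ℝ} (hnn : ∀ i, 0 ≤ f i) (h1 : HasSum f 1) (k : ℕ) :
    bar f k ≤ 1 := by
  unfold bar
  have := Summable.tsum_le_tsum_of_inj (fun i : ℕ => i + k + 1)
    (fun x y h => by dsimp at h; omega) (fun c _ => hnn c)
    (fun i => le_refl (f (i + k + 1)))
    (bar_summable h1.summable k) h1.summable
  simpa [h1.tsum_eq] using this

lemma bar_rec {f : ℕ → ℝ} (hf : Summable f) (k : ℕ) :
    bar f k = f (k + 1) + bar f (k + 1) := by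
  unfold bar
  have h := Summable.tsum_eq_zero_add (f := fun i => f (i + k + 1))
    ((summable_nat_add_iff (f := f) (k + 1)).2 hf)
  simp only [Nat.zero_add] at h
  rw [h]
  congr 1
  exact tsum_congr (fun i => by rw [show i + 1 + k + 1 = i + (k + 1) + 1 by omega])

lemma bar_zero {f : ℕ → ℝ} (h0 : f 0 = 0) (h1 : HasSum f 1) : bar f 0 = 1 := by
  unfold bar
  have h := Summable.tsum_eq_zero_add h1.summable
  rw [h1.tsum_eq, h0, zero_add] at h
  rw [← h]

lemma bar_gf_summable {z : ℝ} {f : ℕ → ℝ} (hnn : ∀ i, 0 ≤ f i) (h1 : HasSum f 1)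
    (hz0 : 0 ≤ z) (hz1 : z < 1) :
    Summable (fun k => bar f k * z ^ k) := by
  refine Summable.of_nonneg_of_le
    (fun k => mul_nonneg (bar_nonneg hnn k) (pow_nonneg hz0 k))
    (fun k => ?_) (summable_geometric_of_lt_one hz0 hz1)
  calc bar f k * z ^ k ≤ 1 * z ^ k :=
        mul_le_mul_of_nonneg_right (bar_le_one hnn h1 k) (pow_nonneg hz0 k)
    _ = z ^ k := one_mul _

lemma tail_gf {z : ℝ} {f : ℕ → ℝ} (hnn : ∀ i, 0 ≤ f i) (h0 : f 0 = 0) (h1 : HasSum f 1)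
    (hz0 : 0 ≤ z) (hz1 : z < 1) :
    (1 - z) * (∑' k, bar f k * z ^ k) = 1 - ∑' i, f i * z ^ i := by
  have hfs : Summable f := h1.summable
  have s1 : Summable (fun k => bar f k * z ^ k) := bar_gf_summable hnn h1 hz0 hz1
  have sshift : Summable (fun k => bar f (k + 1) * z ^ (k + 1)) :=
    (summable_nat_add_iff (f := fun k => bar f k * z ^ k) 1).2 s1
  have s3 : Summable (fun k => bar f k * z ^ (k + 1)) := by
    have := s1.mul_left z
    exact this.congr (fun k => by ring)
  have sf : Summable (fun i => f i * z ^ i) := sum_pow_summable hnn hfs hz0 hz1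
  have h2 : (∑' k, bar f k * z ^ k)
      = 1 + ∑' k, bar f (k + 1) * z ^ (k + 1) := by
    have h := Summable.tsum_eq_zero_add s1
    rw [h, bar_zero h0 h1, pow_zero, one_mul]
  have h3 : z * (∑' k, bar f k * z ^ k)
      = ∑' k, bar f k * z ^ (k + 1) := by
    rw [← tsum_mul_left]
    exact tsum_congr (fun k => by ring)
  have h6 : (∑' i, f i * z ^ i) = ∑' i, f (i + 1) * z ^ (i + 1) := by
    have h := Summable.tsum_eq_zero_add sf
    rw [h0, zero_mul, zero_add] at h
    exact h
  have h5 : ∀ k : ℕ, bar f (k + 1) * z ^ (k + 1)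
      - bar f k * z ^ (k + 1) = -(f (k + 1) * z ^ (k + 1)) := by
    intro k
    rw [bar_rec hfs k]
    ring
  have h4 : (∑' k, bar f (k + 1) * z ^ (k + 1))
      - (∑' k, bar f k * z ^ (k + 1))
      = -(∑' k, f (k + 1) * z ^ (k + 1)) := by
    rw [← Summable.tsum_sub sshift s3, ← tsum_neg]
    exact tsum_congr h5
  have expand : (1 - z) * (∑' k, bar f k * z ^ k)
      = (∑' k, bar f k * z ^ k) - z * (∑' k, bar f k * z ^ k) := by ring
  rw [expand, h3, h2, h6]
  linarith [h4]

open Finset in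
lemma conv_sum_le {u v : ℕ → ℝ} (hu : ∀ i, 0 ≤ u i) (hv : ∀ i, 0 ≤ v i) (N : ℕ) :
    ∑ j ∈ range N, ∑ k ∈ range (j + 1), u k * v (j - k)
      ≤ (∑ m ∈ range N, u m) * (∑ k ∈ range N, v k) := by
  have h1 : ∀ j, ∑ k ∈ range (j + 1), u k * v (j - k)
      = ∑ p ∈ Finset.HasAntidiagonal.antidiagonal j, u p.1 * v p.2 := fun j =>
    (Finset.Nat.sum_antidiagonal_eq_sum_range_succ (fun k l => u k * v l) j).symm
  simp only [h1]
  have hdisj : (↑(range N) : Set ℕ).PairwiseDisjoint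
      (fun j => (Finset.HasAntidiagonal.antidiagonal j : Finset (ℕ × ℕ))) := by
    intro x _ y _ hxy
    simp only [Finset.disjoint_left]
    intro p hp hp'
    rw [Finset.HasAntidiagonal.mem_antidiagonal] at hp hp'
    exact hxy (hp.symm.trans hp')
  rw [← Finset.sum_biUnion hdisj]
  have hsub : (range N).biUnion (fun j => Finset.HasAntidiagonal.antidiagonal j) ⊆ range N ×ˢ range N := by
    intro p hp
    simp only [Finset.mem_biUnion] at hp
    obtain ⟨j, hj, hpj⟩ := hp
    rw [Finset.HasAntidiagonal.mem_antidiagonal] at hpj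
    rw [Finset.mem_range] at hj
    rw [Finset.mem_product, Finset.mem_range, Finset.mem_range]
    omega
  calc ∑ p ∈ (range N).biUnion (fun j => Finset.HasAntidiagonal.antidiagonal j), u p.1 * v p.2
      ≤ ∑ p ∈ range N ×ˢ range N, u p.1 * v p.2 :=
        Finset.sum_le_sum_of_subset_of_nonneg hsub
          (fun p _ _ => mul_nonneg (hu p.1) (hv p.2))
    _ = (∑ m ∈ range N, u m) * (∑ k ∈ range N, v k) := by
        rw [Finset.sum_mul_sum, Finset.sum_product]

lemma norm_summable_of_nonneg {f : ℕ → ℝ} (h : ∀ i, 0 ≤ f i) (hs : Summable f) :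
    Summable (fun i => ‖f i‖) :=
  hs.congr (fun i => (Real.norm_of_nonneg (h i)).symm)

lemma one_sub_pow_le {z : ℝ} (hz0 : 0 ≤ z) (hz1 : z ≤ 1) (i : ℕ) :
    1 - z ^ i ≤ (i : ℝ) * (1 - z) := by
  induction i with
  | zero => simp
  | succ n ih =>
    have hzn : z ^ n ≤ 1 := pow_le_one₀ hz0 hz1
    have hzn0 : 0 ≤ z ^ n := pow_nonneg hz0 n
    push_cast
    calc 1 - z ^ (n + 1) = (1 - z ^ n) + z ^ n * (1 - z) := by ring
      _ ≤ (n : ℝ) * (1 - z) + 1 * (1 - z) := by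
          have : z ^ n * (1 - z) ≤ 1 * (1 - z) :=
            mul_le_mul_of_nonneg_right hzn (by linarith)
          linarith [ih]
      _ = ((n : ℝ) + 1) * (1 - z) := by ring


theorem main_aux (lam ET : ℝ) (hlam : 0 < lam) (hET : 0 < ET)
    (ψ b a p : ℕ → ℝ)
    (hψ0 : ψ 0 = 0) (hψnn : ∀ i, 0 ≤ ψ i) (hψ1 : HasSum ψ 1)
    (hb0 : b 0 = 0) (hbnn : ∀ i, 0 ≤ b i) (hb1 : HasSum b 1)
    (EB : ℝ) (hEB : HasSum (fun i : ℕ => (i : ℝ) * b i) EB)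
    (hann : ∀ j, 0 ≤ a j) (ES : ℝ) (hES : HasSum a ES)
    (hρ1 : lam * ES * EB < 1)
    (hpnn : ∀ j, 0 ≤ p j)
    (hrec : ∀ j, p j = (∑ k ∈ Finset.range (j + 1),
        (ψ k / ET + bar ψ k / ET
          + lam * ∑ i ∈ Finset.range (k + 1), p i * bar b (k - i)) * a (j - k))
        - a j / ET)
    (z : ℝ) (hz0 : 0 ≤ z) (hz1 : z < 1) :
    Summable (fun j : ℕ => p j * z ^ j) ∧
    ET * (∑' j : ℕ, p j * z ^ j) *
        (1 - lam * (∑' j : ℕ, a j * z ^ j) * (1 - ∑' i : ℕ, b i * z ^ i) / (1 - z))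
      = (∑' j : ℕ, a j * z ^ j) * z * (1 - ∑' i : ℕ, ψ i * z ^ i) / (1 - z) := by
  have hz1' : (0:ℝ) < 1 - z := by linarith
  have hzne : (1:ℝ) - z ≠ 0 := ne_of_gt hz1'
  have hETne : ET ≠ 0 := ne_of_gt hET
  -- summability of basic power series
  have hsa : Summable (fun j : ℕ => a j * z ^ j) := sum_pow_summable hann hES.summable hz0 hz1
  have hsψ : Summable (fun i : ℕ => ψ i * z ^ i) := sum_pow_summable hψnn hψ1.summable hz0 hz1
  have hsb : Summable (fun i : ℕ => b i * z ^ i) := sum_pow_summable hbnn hb1.summable hz0 hz1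
  have hsPb : Summable (fun k : ℕ => bar ψ k * z ^ k) := bar_gf_summable hψnn hψ1 hz0 hz1
  have hsBb : Summable (fun m : ℕ => bar b m * z ^ m) := bar_gf_summable hbnn hb1 hz0 hz1
  have hPgf : (1 - z) * (∑' k, bar ψ k * z ^ k) = 1 - ∑' i, ψ i * z ^ i :=
    tail_gf hψnn hψ0 hψ1 hz0 hz1
  have hBgf : (1 - z) * (∑' m, bar b m * z ^ m) = 1 - ∑' i, b i * z ^ i :=
    tail_gf hbnn hb0 hb1 hz0 hz1
  set Az := ∑' j : ℕ, a j * z ^ j with hAzdef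
  set Bz := ∑' i : ℕ, b i * z ^ i with hBzdef
  set Ψz := ∑' i : ℕ, ψ i * z ^ i with hΨzdef
  set SP := ∑' k : ℕ, bar ψ k * z ^ k with hSPdef
  set SB := ∑' m : ℕ, bar b m * z ^ m with hSBdef
  -- nonnegativity facts
  have hAznn : 0 ≤ Az := by
    rw [hAzdef]; exact tsum_nonneg fun j => mul_nonneg (hann j) (pow_nonneg hz0 j)
  have hΨznn : 0 ≤ Ψz := by
    rw [hΨzdef]; exact tsum_nonneg fun j => mul_nonneg (hψnn j) (pow_nonneg hz0 j)
  have hSPnn : 0 ≤ SP := by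
    rw [hSPdef]; exact tsum_nonneg fun k => mul_nonneg (bar_nonneg hψnn k) (pow_nonneg hz0 k)
  have hSBnn : 0 ≤ SB := by
    rw [hSBdef]; exact tsum_nonneg fun k => mul_nonneg (bar_nonneg hbnn k) (pow_nonneg hz0 k)
  have hAzle : Az ≤ ES := by
    rw [hAzdef, ← hES.tsum_eq]
    refine Summable.tsum_le_tsum (fun j => ?_) hsa hES.summable
    have h1 : z ^ j ≤ 1 := pow_le_one₀ hz0 hz1.le
    nlinarith [hann j, pow_nonneg hz0 j]
  have hESnn : 0 ≤ ES := le_trans hAznn hAzle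
  have hEBnn : 0 ≤ EB := by
    have h : (0:ℝ) ≤ ∑' i : ℕ, (i:ℝ) * b i :=
      tsum_nonneg (fun i => mul_nonneg (Nat.cast_nonneg i) (hbnn i))
    rwa [hEB.tsum_eq] at h
  -- SB ≤ EB
  have hSBle : SB ≤ EB := by
    have e : 1 - Bz = ∑' i : ℕ, (b i - b i * z ^ i) := by
      rw [hBzdef, ← hb1.tsum_eq]
      exact (Summable.tsum_sub hb1.summable hsb).symm
    have e2 : EB * (1 - z) = ∑' i : ℕ, ((i : ℝ) * b i * (1 - z)) := by
      rw [← hEB.tsum_eq, tsum_mul_right]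
    have h1 : 1 - Bz ≤ EB * (1 - z) := by
      rw [e, e2]
      refine Summable.tsum_le_tsum (fun i => ?_) (hb1.summable.sub hsb) (hEB.summable.mul_right _)
      have := one_sub_pow_le hz0 hz1.le i
      nlinarith [hbnn i]
    have h2 : (1 - z) * SB ≤ (1 - z) * EB := by
      rw [hBgf]; linarith
    exact (mul_le_mul_iff_right₀ hz1').1 h2
  -- the dominating sequence
  set vv : ℕ → ℝ := fun k => ψ k * z ^ k / ET + bar ψ k * z ^ k / ET
      + lam * ∑ i ∈ Finset.range (k + 1), (p i * z ^ i) * (bar b (k - i) * z ^ (k - i))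
    with hvvdef
  have hvnn : ∀ k, 0 ≤ vv k := by
    intro k
    simp only [hvvdef]
    have t1 : 0 ≤ ψ k * z ^ k / ET :=
      div_nonneg (mul_nonneg (hψnn k) (pow_nonneg hz0 k)) hET.le
    have t2 : 0 ≤ bar ψ k * z ^ k / ET :=
      div_nonneg (mul_nonneg (bar_nonneg hψnn k) (pow_nonneg hz0 k)) hET.le
    have t3 : 0 ≤ lam * ∑ i ∈ Finset.range (k + 1), (p i * z ^ i) * (bar b (k - i) * z ^ (k - i)) :=
      mul_nonneg hlam.le (Finset.sum_nonneg fun i _ =>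
        mul_nonneg (mul_nonneg (hpnn i) (pow_nonneg hz0 i))
          (mul_nonneg (bar_nonneg hbnn _) (pow_nonneg hz0 _)))
    linarith
  -- key pointwise splitting
  have hsplit : ∀ j, p j * z ^ j
      = (∑ k ∈ Finset.range (j + 1), vv k * (a (j - k) * z ^ (j - k)))
        - (a j * z ^ j) / ET := by
    intro j
    rw [hrec j, sub_mul, Finset.sum_mul]
    have hterm : ∀ k ∈ Finset.range (j + 1),
        ((ψ k / ET + bar ψ k / ET
          + lam * ∑ i ∈ Finset.range (k + 1), p i * bar b (k - i)) * a (j - k)) * z ^ j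
        = vv k * (a (j - k) * z ^ (j - k)) := by
      intro k hk
      rw [Finset.mem_range, Nat.lt_succ_iff] at hk
      have hzz : z ^ k * z ^ (j - k) = z ^ j := by
        rw [← pow_add]; congr 1; omega
      have inner : ∑ i ∈ Finset.range (k + 1), (p i * z ^ i) * (bar b (k - i) * z ^ (k - i))
          = (∑ i ∈ Finset.range (k + 1), p i * bar b (k - i)) * z ^ k := by
        rw [Finset.sum_mul]
        refine Finset.sum_congr rfl (fun i hi => ?_)
        rw [Finset.mem_range, Nat.lt_succ_iff] at hi
        have hzi : z ^ i * z ^ (k - i) = z ^ k := by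
          rw [← pow_add]; congr 1; omega
        calc p i * z ^ i * (bar b (k - i) * z ^ (k - i))
            = p i * bar b (k - i) * (z ^ i * z ^ (k - i)) := by ring
          _ = p i * bar b (k - i) * z ^ k := by rw [hzi]
      simp only [hvvdef]
      rw [inner, ← hzz]
      ring
    rw [Finset.sum_congr rfl hterm]
    ring
  -- partial sum bound
  have hpznn : ∀ j : ℕ, 0 ≤ p j * z ^ j := fun j => mul_nonneg (hpnn j) (pow_nonneg hz0 j)
  have hbound : ∀ N, ∑ j ∈ Finset.range N, p j * z ^ j
      ≤ ES * (Ψz + SP) / ET / (1 - lam * ES * EB) := by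
    intro N
    have hMnn : 0 ≤ ∑ j ∈ Finset.range N, p j * z ^ j :=
      Finset.sum_nonneg fun j _ => hpznn j
    have h1 : ∑ j ∈ Finset.range N, p j * z ^ j
        ≤ (∑ k ∈ Finset.range N, vv k) * (∑ m ∈ Finset.range N, a m * z ^ m) := by
      calc ∑ j ∈ Finset.range N, p j * z ^ j
          ≤ ∑ j ∈ Finset.range N, ∑ k ∈ Finset.range (j + 1), vv k * (a (j - k) * z ^ (j - k)) := by
            refine Finset.sum_le_sum fun j _ => ?_
            rw [hsplit j]
            exact sub_le_self _ (div_nonneg (mul_nonneg (hann j) (pow_nonneg hz0 j)) hET.le)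
        _ ≤ _ := conv_sum_le hvnn (fun m => mul_nonneg (hann m) (pow_nonneg hz0 m)) N
    have t1 : ∑ k ∈ Finset.range N, ψ k * z ^ k ≤ Ψz := by
      rw [hΨzdef]
      exact Summable.sum_le_tsum _ (fun i _ => mul_nonneg (hψnn i) (pow_nonneg hz0 i)) hsψ
    have t2 : ∑ k ∈ Finset.range N, bar ψ k * z ^ k ≤ SP := by
      rw [hSPdef]
      exact Summable.sum_le_tsum _ (fun i _ => mul_nonneg (bar_nonneg hψnn i) (pow_nonneg hz0 i)) hsPb
    have t3 : ∑ k ∈ Finset.range N,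
        ∑ i ∈ Finset.range (k + 1), (p i * z ^ i) * (bar b (k - i) * z ^ (k - i))
        ≤ (∑ j ∈ Finset.range N, p j * z ^ j) * SB := by
      calc ∑ k ∈ Finset.range N,
            ∑ i ∈ Finset.range (k + 1), (p i * z ^ i) * (bar b (k - i) * z ^ (k - i))
          ≤ (∑ i ∈ Finset.range N, p i * z ^ i) * (∑ m ∈ Finset.range N, bar b m * z ^ m) :=
            conv_sum_le hpznn (fun m => mul_nonneg (bar_nonneg hbnn m) (pow_nonneg hz0 m)) N
        _ ≤ (∑ j ∈ Finset.range N, p j * z ^ j) * SB := by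
            refine mul_le_mul_of_nonneg_left ?_ hMnn
            rw [hSBdef]
            exact Summable.sum_le_tsum _ (fun m _ => mul_nonneg (bar_nonneg hbnn m) (pow_nonneg hz0 m)) hsBb
    have h2 : ∑ k ∈ Finset.range N, vv k
        ≤ Ψz / ET + SP / ET + lam * ((∑ j ∈ Finset.range N, p j * z ^ j) * SB) := by
      have e : ∑ k ∈ Finset.range N, vv k
          = (∑ k ∈ Finset.range N, ψ k * z ^ k) / ET
            + (∑ k ∈ Finset.range N, bar ψ k * z ^ k) / ET
            + lam * ∑ k ∈ Finset.range N,
                ∑ i ∈ Finset.range (k + 1), (p i * z ^ i) * (bar b (k - i) * z ^ (k - i)) := by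
        simp only [hvvdef]
        rw [Finset.sum_add_distrib, Finset.sum_add_distrib, ← Finset.sum_div, ← Finset.sum_div,
          ← Finset.mul_sum]
      rw [e]
      gcongr
    have h3 : (∑ m ∈ Finset.range N, a m * z ^ m) ≤ ES := by
      refine le_trans ?_ hAzle
      rw [hAzdef]
      exact Summable.sum_le_tsum _ (fun m _ => mul_nonneg (hann m) (pow_nonneg hz0 m)) hsa
    have h4 : 0 ≤ ∑ m ∈ Finset.range N, a m * z ^ m :=
      Finset.sum_nonneg fun m _ => mul_nonneg (hann m) (pow_nonneg hz0 m)
    have h5 : 0 ≤ Ψz / ET + SP / ET + lam * ((∑ j ∈ Finset.range N, p j * z ^ j) * SB) := by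
      have : 0 ≤ lam * ((∑ j ∈ Finset.range N, p j * z ^ j) * SB) :=
        mul_nonneg hlam.le (mul_nonneg hMnn hSBnn)
      have := div_nonneg hΨznn hET.le
      have := div_nonneg hSPnn hET.le
      linarith [div_nonneg hΨznn hET.le, div_nonneg hSPnn hET.le,
        mul_nonneg hlam.le (mul_nonneg hMnn hSBnn)]
    have h6 : ∑ j ∈ Finset.range N, p j * z ^ j
        ≤ (Ψz / ET + SP / ET + lam * ((∑ j ∈ Finset.range N, p j * z ^ j) * SB)) * ES :=
      le_trans h1 (mul_le_mul h2 h3 h4 h5)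
    have hρ' : lam * ((∑ j ∈ Finset.range N, p j * z ^ j) * SB) * ES
        ≤ lam * ES * EB * (∑ j ∈ Finset.range N, p j * z ^ j) := by
      calc lam * ((∑ j ∈ Finset.range N, p j * z ^ j) * SB) * ES
          = lam * ES * (∑ j ∈ Finset.range N, p j * z ^ j) * SB := by ring
        _ ≤ lam * ES * (∑ j ∈ Finset.range N, p j * z ^ j) * EB :=
            mul_le_mul_of_nonneg_left hSBle
              (mul_nonneg (mul_nonneg hlam.le hESnn) hMnn)
        _ = lam * ES * EB * (∑ j ∈ Finset.range N, p j * z ^ j) := by ring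
    have h7 : (∑ j ∈ Finset.range N, p j * z ^ j) * (1 - lam * ES * EB)
        ≤ ES * (Ψz + SP) / ET := by
      have expand : (Ψz / ET + SP / ET + lam * ((∑ j ∈ Finset.range N, p j * z ^ j) * SB)) * ES
          = ES * (Ψz + SP) / ET
            + lam * ((∑ j ∈ Finset.range N, p j * z ^ j) * SB) * ES := by ring
      rw [expand] at h6
      have goal' : (∑ j ∈ Finset.range N, p j * z ^ j) * (1 - lam * ES * EB)
          = (∑ j ∈ Finset.range N, p j * z ^ j)
            - lam * ES * EB * (∑ j ∈ Finset.range N, p j * z ^ j) := by ring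
      rw [goal']
      linarith [hρ']
    rw [le_div_iff₀ (by linarith : (0:ℝ) < 1 - lam * ES * EB)]
    exact h7
  have hsum : Summable (fun j : ℕ => p j * z ^ j) :=
    summable_of_sum_range_le hpznn hbound
  refine ⟨hsum, ?_⟩
  set G := ∑' j : ℕ, p j * z ^ j with hGdef
  -- norm-summability
  have npz : Summable (fun j : ℕ => ‖p j * z ^ j‖) := norm_summable_of_nonneg hpznn hsum
  have nBb : Summable (fun m : ℕ => ‖bar b m * z ^ m‖) :=
    norm_summable_of_nonneg (fun m => mul_nonneg (bar_nonneg hbnn m) (pow_nonneg hz0 m)) hsBb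
  have nu : Summable (fun j : ℕ => ‖a j * z ^ j‖) :=
    norm_summable_of_nonneg (fun j => mul_nonneg (hann j) (pow_nonneg hz0 j)) hsa
  have hconvs : Summable (fun k : ℕ =>
      ∑ i ∈ Finset.range (k + 1), (p i * z ^ i) * (bar b (k - i) * z ^ (k - i))) :=
    (summable_norm_sum_mul_range_of_summable_norm npz nBb).of_norm
  have hconval : (∑' k : ℕ,
      ∑ i ∈ Finset.range (k + 1), (p i * z ^ i) * (bar b (k - i) * z ^ (k - i))) = G * SB := by
    rw [hGdef, hSBdef]
    exact (tsum_mul_tsum_eq_tsum_sum_range_of_summable_norm npz nBb).symm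
  have hsvv : Summable vv := by
    simp only [hvvdef]
    exact ((hsψ.div_const ET).add (hsPb.div_const ET)).add (hconvs.mul_left lam)
  have nvv : Summable (fun k : ℕ => ‖vv k‖) := norm_summable_of_nonneg hvnn hsvv
  have hvvt : ∑' k, vv k = Ψz / ET + SP / ET + lam * (G * SB) := by
    simp only [hvvdef]
    rw [Summable.tsum_add ((hsψ.div_const ET).add (hsPb.div_const ET)) (hconvs.mul_left lam),
      Summable.tsum_add (hsψ.div_const ET) (hsPb.div_const ET), tsum_div_const, tsum_div_const,
      tsum_mul_left, hconval, hΨzdef, hSPdef]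
  have hconv2s : Summable (fun j : ℕ =>
      ∑ k ∈ Finset.range (j + 1), vv k * (a (j - k) * z ^ (j - k))) :=
    (summable_norm_sum_mul_range_of_summable_norm nvv nu).of_norm
  have hG : G = (∑' k, vv k) * Az - Az / ET := by
    rw [hGdef, tsum_congr hsplit,
      Summable.tsum_sub hconv2s ((hsa.div_const ET) : Summable (fun j : ℕ => (a j * z ^ j) / ET)),
      tsum_div_const, ← tsum_mul_tsum_eq_tsum_sum_range_of_summable_norm nvv nu, hAzdef]
  have hG' : ET * G = ET * (∑' k, vv k) * Az - Az := by
    rw [hG]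
    field_simp
  have hvvt' : ET * (∑' k, vv k) = Ψz + SP + ET * (lam * (G * SB)) := by
    rw [hvvt]
    field_simp
  have E' : ET * G = (Ψz + SP + ET * lam * (G * SB)) * Az - Az := by
    linear_combination hG' + Az * hvvt'
  have e1 : Ψz + SP - 1 = z * SP := by linear_combination hPgf
  have main : ET * G * (1 - lam * Az * SB) = Az * z * SP := by
    linear_combination E' + Az * e1
  have hb' : 1 - Bz = (1 - z) * SB := hBgf.symm
  have hp' : 1 - Ψz = (1 - z) * SP := hPgf.symm
  rw [hb', hp']
  have c1 : lam * Az * ((1 - z) * SB) / (1 - z) = lam * Az * SB := by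
    field_simp
  have c2 : Az * z * ((1 - z) * SP) / (1 - z) = Az * z * SP := by
    field_simp
  rw [c1, c2]
  exact main

open Finset in
lemma sum_range_succ_eq (F : ℕ → ℝ) (n : ℕ) :
    ∑ k ∈ Finset.range (n + 1), F k = F 0 + ∑ k ∈ Finset.Icc 1 n, F k := by
  have h : Finset.range (n + 1) = insert 0 (Finset.Icc 1 n) := by
    ext x
    simp only [Finset.mem_range, Finset.mem_insert, Finset.mem_Icc]
    omega
  rw [h, Finset.sum_insert (by simp)]

end Stmt0Aux

/-- Generating-function identity for the recursion of the working-mode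
probabilities: for every `z ∈ [0,1)` the series `G₁(z) = ∑_{j≥1} p j * z^j`
is summable and satisfies
`ET·G₁(z)·(1 − λ·A(z)·(1−B(z))/(1−z)) = A(z)·z·(1−Ψ(z))/(1−z)`. -/
theorem stmt_0
    (lam ET : ℝ) (hlam : 0 < lam) (hET : 0 < ET)
    (ψ b a p : ℕ → ℝ)
    (hψ0 : ψ 0 = 0) (hψnn : ∀ i, 0 ≤ ψ i) (hψ1 : HasSum ψ 1)
    (EY : ℝ) (hEY : HasSum (fun i : ℕ => (i : ℝ) * ψ i) EY)
    (hb0 : b 0 = 0) (hbnn : ∀ i, 0 ≤ b i) (hb1 : HasSum b 1)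
    (EB : ℝ) (hEB : HasSum (fun i : ℕ => (i : ℝ) * b i) EB)
    (hann : ∀ j, 0 ≤ a j)
    (ES : ℝ) (hES : HasSum a ES)
    (hρ0 : 0 < lam * ES * EB) (hρ1 : lam * ES * EB < 1)
    (hpnn : ∀ j, 0 ≤ p j) (hp0 : p 0 = 0)
    (hrec : ∀ j, 1 ≤ j → p j =
      (1 / ET) * ∑ s ∈ Finset.Icc 1 j, ψ s * a (j - s)
      + ∑ k ∈ Finset.Icc 1 j, a (j - k) *
          ((∑' i : ℕ, ψ (i + k + 1)) / ET
            + lam * ∑ i ∈ Finset.Icc 1 k, p i * (∑' m : ℕ, b (m + (k - i) + 1))))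
    (z : ℝ) (hz0 : 0 ≤ z) (hz1 : z < 1) :
    Summable (fun j : ℕ => p j * z ^ j) ∧
    ET * (∑' j : ℕ, p j * z ^ j) *
        (1 - lam * (∑' j : ℕ, a j * z ^ j) * (1 - ∑' i : ℕ, b i * z ^ i) / (1 - z))
      = (∑' j : ℕ, a j * z ^ j) * z * (1 - ∑' i : ℕ, ψ i * z ^ i) / (1 - z) := by
  refine Stmt0Aux.main_aux lam ET hlam hET ψ b a p hψ0 hψnn hψ1 hb0 hbnn hb1 EB hEB hann ES hES
    hρ1 hpnn ?_ z hz0 hz1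
  intro j
  rcases Nat.eq_zero_or_pos j with rfl | hj
  · rw [Finset.sum_range_one, Finset.sum_range_one, hp0, hψ0, Stmt0Aux.bar_zero hψ0 hψ1]
    ring
  · rw [hrec j hj]
    simp only [Stmt0Aux.bar]
    have inner : ∀ k, (∑ i ∈ Finset.range (k + 1), p i * ∑' (m : ℕ), b (m + (k - i) + 1))
        = ∑ i ∈ Finset.Icc 1 k, p i * ∑' (m : ℕ), b (m + (k - i) + 1) := by
      intro k
      rw [Stmt0Aux.sum_range_succ_eq]
      simp [hp0]
    simp only [inner]
    rw [Stmt0Aux.sum_range_succ_eq]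
    have hT0 : (∑' i : ℕ, ψ (i + 0 + 1)) = 1 := Stmt0Aux.bar_zero hψ0 hψ1
    have hS : 1 / ET * ∑ s ∈ Finset.Icc 1 j, ψ s * a (j - s)
        + ∑ k ∈ Finset.Icc 1 j, a (j - k) * ((∑' (i : ℕ), ψ (i + k + 1)) / ET
            + lam * ∑ i ∈ Finset.Icc 1 k, p i * ∑' (m : ℕ), b (m + (k - i) + 1))
        = ∑ k ∈ Finset.Icc 1 j, (ψ k / ET + (∑' (i : ℕ), ψ (i + k + 1)) / ET
            + lam * ∑ i ∈ Finset.Icc 1 k, p i * ∑' (m : ℕ), b (m + (k - i) + 1)) * a (j - k) := by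
      rw [Finset.mul_sum, ← Finset.sum_add_distrib]
      exact Finset.sum_congr rfl fun k _ => by ring
    rw [hS]
    rw [show Finset.Icc 1 0 = (∅ : Finset ℕ) from rfl]
    simp only [hψ0, hT0, Finset.sum_empty, Nat.sub_zero, mul_zero, zero_div, zero_add, add_zero]
    ring
end

section
/- Decomposition theorem: define p₁ = ES·EY/((1−ρ)·ET), the conditional PGF G̃₁(z) = G₁(z)/p₁, the equilibrium PGFs Bᵉ(z) = (1−B(z))/(EB·(1−z)) and Ψᵉ(z) = (1−Ψ(z))/(EY·(1−z)), and P̃₁(z) = ((1−ρ)/(λ·ES))·λ·z·A(z)·Bᵉ(z)/(1 − λ·A(z)·(1−B(z))/(1−z)). Then for every z ∈ (0,1), G̃₁(z) = P̃₁(z)·(Bᵉ(z))⁻¹·Ψᵉ(z). -/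
set_option maxHeartbeats 1000000

open Finset

private lemma range_succ_sum_eq_Icc (H : ℕ → ℝ) (h0 : H 0 = 0) (j : ℕ) :
    ∑ k ∈ Finset.range (j+1), H k = ∑ k ∈ Finset.Icc 1 j, H k := by
  refine (Finset.sum_subset (fun x hx => ?_) (fun x hx hnx => ?_)).symm
  · simp only [Finset.mem_Icc] at hx; simp only [Finset.mem_range]; omega
  · simp only [Finset.mem_range] at hx; simp only [Finset.mem_Icc] at hnx
    have : x = 0 := by omega
    simp [this, h0]

private lemma pow_split (z : ℝ) {k j : ℕ} (h : k ≤ j) : z ^ k * z ^ (j - k) = z ^ j := by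
  rw [← pow_add]; congr 1; omega

private lemma conv_partial_le (f g : ℕ → ℝ) (hf : ∀ i, 0 ≤ f i) (hg : ∀ i, 0 ≤ g i) (n : ℕ) :
    ∑ j ∈ Finset.range n, ∑ k ∈ Finset.range (j+1), f k * g (j - k)
      ≤ (∑ k ∈ Finset.range n, f k) * (∑ u ∈ Finset.range n, g u) := by
  rw [Finset.sum_comm' (t' := Finset.range n) (s' := fun k => Finset.Ico k n)
    (by intro j k; simp only [Finset.mem_range, Finset.mem_Ico, Nat.lt_succ_iff]; omega)]
  rw [Finset.sum_mul]
  apply Finset.sum_le_sum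
  intro k _
  have h1 : ∑ j ∈ Finset.Ico k n, f k * g (j - k) = f k * ∑ u ∈ Finset.range (n - k), g u := by
    rw [Finset.sum_Ico_eq_sum_range, Finset.mul_sum]
    exact Finset.sum_congr rfl (fun i _ => by rw [Nat.add_sub_cancel_left])
  rw [h1]
  apply mul_le_mul_of_nonneg_left _ (hf k)
  apply Finset.sum_le_sum_of_subset_of_nonneg (Finset.range_subset_range.2 (Nat.sub_le _ _))
  exact fun i _ _ => hg i

private lemma tail_facts (c : ℕ → ℝ) (hcnn : ∀ i, 0 ≤ c i) (M : ℝ)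
    (hM : HasSum (fun i : ℕ => (i : ℝ) * c i) M) (z : ℝ) (hz0 : 0 ≤ z) (hz1 : z ≤ 1) :
    Summable (fun k => (∑' m, c (m + k + 1)) * z ^ k) ∧
    (∑' k, (∑' m, c (m + k + 1)) * z ^ k) = ∑' m, c m * (∑ k ∈ Finset.range m, z ^ k) := by
  set F : ℕ × ℕ → ℝ := fun q => if q.2 < q.1 then c q.1 * z ^ q.2 else 0 with hF
  have hFnn : 0 ≤ F := by
    intro q; by_cases h : q.2 < q.1 <;> simp only [hF, h, if_true, if_false] <;>
      first
        | exact mul_nonneg (hcnn _) (pow_nonneg hz0 _)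
        | exact le_refl 0
  have hslice : ∀ m, Summable fun k => F (m, k) := by
    intro m
    apply summable_of_ne_finset_zero (s := Finset.range m)
    intro k hk
    simp only [Finset.mem_range, not_lt] at hk
    simp [hF, Nat.not_lt.mpr hk]
  have hslice_sum : ∀ m, ∑' k, F (m, k) = c m * ∑ k ∈ Finset.range m, z ^ k := by
    intro m
    rw [tsum_eq_sum (s := Finset.range m) (fun k hk => by
      simp only [Finset.mem_range, not_lt] at hk; simp [hF, Nat.not_lt.mpr hk])]
    rw [Finset.mul_sum]
    exact Finset.sum_congr rfl fun k hk => by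
      simp only [Finset.mem_range] at hk; simp [hF, hk]
  have hmarg : Summable fun m => ∑' k, F (m, k) := by
    apply Summable.of_nonneg_of_le (fun m => tsum_nonneg fun k => hFnn _)
      (fun m => ?_) hM.summable
    rw [hslice_sum]
    calc c m * ∑ k ∈ Finset.range m, z ^ k ≤ c m * ∑ _k ∈ Finset.range m, (1:ℝ) := by
          apply mul_le_mul_of_nonneg_left _ (hcnn m)
          exact Finset.sum_le_sum fun k _ => pow_le_one₀ hz0 hz1
      _ = (m : ℝ) * c m := by simp [mul_comm]
  have hFsum : Summable F := (summable_prod_of_nonneg hFnn).2 ⟨hslice, hmarg⟩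
  have hcol : ∀ k, ∑' m, F (m, k) = (∑' m, c (m + k + 1)) * z ^ k := by
    intro k
    have hinj : Function.Injective (fun i : ℕ => i + k + 1) := fun a b h => by
      simpa using h
    have hsupp : Function.support (fun m => F (m, k)) ⊆ Set.range (fun i : ℕ => i + k + 1) := by
      intro x hx
      have hxk : k < x := by
        by_contra h
        exact hx (by simp [hF, h])
      exact ⟨x - k - 1, show x - k - 1 + k + 1 = x by omega⟩
    calc ∑' m, F (m, k) = ∑' i, F (i + k + 1, k) := (hinj.tsum_eq hsupp).symm
      _ = ∑' i, c (i + k + 1) * z ^ k := tsum_congr fun i => by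
            simp [hF, show k < i + k + 1 by omega]
      _ = (∑' i, c (i + k + 1)) * z ^ k := tsum_mul_right
  have hswap := Summable.tsum_comm (f := fun m k => F (m, k)) (by exact hFsum)
  have hmargk : Summable fun k => ∑' m, F (m, k) := hFsum.prod_symm.prod
  constructor
  · have : (fun k => (∑' m, c (m + k + 1)) * z ^ k) = fun k => ∑' m, F (m, k) :=
      funext fun k => (hcol k).symm
    rw [this]; exact hmargk
  · calc (∑' k, (∑' m, c (m + k + 1)) * z ^ k) = ∑' k, ∑' m, F (m, k) :=
          tsum_congr fun k => (hcol k).symm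
      _ = ∑' m, ∑' k, F (m, k) := hswap
      _ = ∑' m, c m * (∑ k ∈ Finset.range m, z ^ k) := tsum_congr hslice_sum

/-- Decomposition theorem: with `p₁ = ES·EY/((1−ρ)·ET)`, the conditional PGF
`G̃₁(z) = G₁(z)/p₁` equals `P̃₁(z)·(Bᵉ(z))⁻¹·Ψᵉ(z)` for every `z ∈ (0,1)`. -/
theorem stmt_1
    (lam ET : ℝ) (hlam : 0 < lam) (hET : 0 < ET)
    (ψ b a p : ℕ → ℝ)
    (hψ0 : ψ 0 = 0) (hψnn : ∀ i, 0 ≤ ψ i) (hψ1 : HasSum ψ 1)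
    (EY : ℝ) (hEY : HasSum (fun i : ℕ => (i : ℝ) * ψ i) EY)
    (hb0 : b 0 = 0) (hbnn : ∀ i, 0 ≤ b i) (hb1 : HasSum b 1)
    (EB : ℝ) (hEB : HasSum (fun i : ℕ => (i : ℝ) * b i) EB)
    (hann : ∀ j, 0 ≤ a j)
    (ES : ℝ) (hES : HasSum a ES)
    (hρ0 : 0 < lam * ES * EB) (hρ1 : lam * ES * EB < 1)
    (hpnn : ∀ j, 0 ≤ p j) (hp0 : p 0 = 0)
    (hrec : ∀ j, 1 ≤ j → p j =
      (1 / ET) * ∑ s ∈ Finset.Icc 1 j, ψ s * a (j - s)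
      + ∑ k ∈ Finset.Icc 1 j, a (j - k) *
          ((∑' i : ℕ, ψ (i + k + 1)) / ET
            + lam * ∑ i ∈ Finset.Icc 1 k, p i * (∑' m : ℕ, b (m + (k - i) + 1))))
    (z : ℝ) (hz0 : 0 < z) (hz1 : z < 1) :
    (∑' j : ℕ, p j * z ^ j) / (ES * EY / ((1 - lam * ES * EB) * ET))
      = (((1 - lam * ES * EB) / (lam * ES)) *
            (lam * z * (∑' j : ℕ, a j * z ^ j) *
              ((1 - ∑' i : ℕ, b i * z ^ i) / (EB * (1 - z)))) /
            (1 - lam * (∑' j : ℕ, a j * z ^ j) *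
              (1 - ∑' i : ℕ, b i * z ^ i) / (1 - z)))
        * ((1 - ∑' i : ℕ, b i * z ^ i) / (EB * (1 - z)))⁻¹
        * ((1 - ∑' i : ℕ, ψ i * z ^ i) / (EY * (1 - z))) := by
  have hz0' : (0:ℝ) ≤ z := hz0.le
  have hz1' : z ≤ 1 := hz1.le
  have h1z : (0:ℝ) < 1 - z := by linarith
  -- basic summabilities
  have hsψ : Summable (fun i => ψ i * z ^ i) :=
    hψ1.summable.of_nonneg_of_le (fun i => mul_nonneg (hψnn i) (pow_nonneg hz0' i))
      (fun i => mul_le_of_le_one_right (hψnn i) (pow_le_one₀ hz0' hz1'))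
  have hsb : Summable (fun i => b i * z ^ i) :=
    hb1.summable.of_nonneg_of_le (fun i => mul_nonneg (hbnn i) (pow_nonneg hz0' i))
      (fun i => mul_le_of_le_one_right (hbnn i) (pow_le_one₀ hz0' hz1'))
  have hsa : Summable (fun i => a i * z ^ i) :=
    hES.summable.of_nonneg_of_le (fun i => mul_nonneg (hann i) (pow_nonneg hz0' i))
      (fun i => mul_le_of_le_one_right (hann i) (pow_le_one₀ hz0' hz1'))
  -- tail facts
  obtain ⟨hsTψ, hTψeq⟩ := tail_facts ψ hψnn EY hEY z hz0' hz1'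
  obtain ⟨hsTb, hTbeq⟩ := tail_facts b hbnn EB hEB z hz0' hz1'
  obtain ⟨hsTψ1, hTψ1eq⟩ := tail_facts ψ hψnn EY hEY 1 zero_le_one le_rfl
  obtain ⟨hsTb1, hTb1eq⟩ := tail_facts b hbnn EB hEB 1 zero_le_one le_rfl
  have hΨbarnn : ∀ k, 0 ≤ ∑' i : ℕ, ψ (i + k + 1) :=
    fun k => tsum_nonneg fun i => hψnn _
  have hBbarnn : ∀ k, 0 ≤ ∑' m : ℕ, b (m + k + 1) :=
    fun k => tsum_nonneg fun m => hbnn _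
  -- sums of tails equal means
  have hsΨbar : Summable (fun k => ∑' i : ℕ, ψ (i + k + 1)) := by
    simpa using hsTψ1
  have hsBbar : Summable (fun k => ∑' m : ℕ, b (m + k + 1)) := by
    simpa using hsTb1
  have hΨbarsum : (∑' k : ℕ, ∑' i : ℕ, ψ (i + k + 1)) = EY := by
    have h2 : (∑' m : ℕ, ψ m * (∑ k ∈ Finset.range m, (1:ℝ) ^ k)) = EY := by
      rw [← hEY.tsum_eq]
      exact tsum_congr fun m => by simp [mul_comm]
    simpa using hTψ1eq.trans h2
  have hBbarsum : (∑' k : ℕ, ∑' m : ℕ, b (m + k + 1)) = EB := by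
    have h2 : (∑' m : ℕ, b m * (∑ k ∈ Finset.range m, (1:ℝ) ^ k)) = EB := by
      rw [← hEB.tsum_eq]
      exact tsum_congr fun m => by simp [mul_comm]
    simpa using hTb1eq.trans h2
  -- abbreviations
  set Az := ∑' j : ℕ, a j * z ^ j with hAzdef
  set Ψz := ∑' i : ℕ, ψ i * z ^ i with hΨzdef
  set Bz := ∑' i : ℕ, b i * z ^ i with hBzdef
  set G := ∑' j : ℕ, p j * z ^ j with hGdef
  set TΨ := ∑' k : ℕ, (∑' i : ℕ, ψ (i + k + 1)) * z ^ k with hTΨdef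
  set TB := ∑' k : ℕ, (∑' m : ℕ, b (m + k + 1)) * z ^ k with hTBdef
  -- geometric identities
  have hgeom : ∀ m : ℕ, (∑ k ∈ Finset.range m, z ^ k) * (1 - z) = 1 - z ^ m := by
    intro m
    have := geom_sum_mul z m
    linear_combination -this
  have hTψ_mul : TΨ * (1 - z) = 1 - Ψz := by
    rw [hTψeq, ← tsum_mul_right]
    have : ∀ m : ℕ, ψ m * (∑ k ∈ Finset.range m, z ^ k) * (1 - z) = ψ m - ψ m * z ^ m := by
      intro m
      linear_combination ψ m * hgeom m
    rw [tsum_congr this, Summable.tsum_sub hψ1.summable hsψ, hψ1.tsum_eq]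
  have hTb_mul : TB * (1 - z) = 1 - Bz := by
    rw [hTbeq, ← tsum_mul_right]
    have : ∀ m : ℕ, b m * (∑ k ∈ Finset.range m, z ^ k) * (1 - z) = b m - b m * z ^ m := by
      intro m
      linear_combination b m * hgeom m
    rw [tsum_congr this, Summable.tsum_sub hb1.summable hsb, hb1.tsum_eq]
  -- bounds
  have hAznn : 0 ≤ Az := tsum_nonneg fun i => mul_nonneg (hann i) (pow_nonneg hz0' i)
  have hTBnn : 0 ≤ TB := tsum_nonneg fun k => mul_nonneg (hBbarnn k) (pow_nonneg hz0' k)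
  have hAzle : Az ≤ ES := by
    rw [← hES.tsum_eq]
    exact Summable.tsum_le_tsum (fun i => mul_le_of_le_one_right (hann i) (pow_le_one₀ hz0' hz1'))
      hsa hES.summable
  have hTBle : TB ≤ EB := by
    rw [hTBdef, ← hBbarsum]
    exact Summable.tsum_le_tsum (fun k => mul_le_of_le_one_right (hBbarnn k) (pow_le_one₀ hz0' hz1'))
      hsTb hsBbar
  have hΨzle : Ψz ≤ z := by
    have h1 : ∀ i, ψ i * z ^ i ≤ ψ i * z := by
      intro i
      rcases Nat.eq_zero_or_pos i with h | h
      · simp [h, hψ0]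
      · exact mul_le_mul_of_nonneg_left (pow_le_of_le_one hz0' hz1' (by omega)) (hψnn i)
    calc Ψz ≤ ∑' i, ψ i * z := Summable.tsum_le_tsum h1 hsψ (hψ1.summable.mul_right z)
      _ = z := by rw [tsum_mul_right, hψ1.tsum_eq, one_mul]
  have hBzle : Bz ≤ z := by
    have h1 : ∀ i, b i * z ^ i ≤ b i * z := by
      intro i
      rcases Nat.eq_zero_or_pos i with h | h
      · simp [h, hb0]
      · exact mul_le_mul_of_nonneg_left (pow_le_of_le_one hz0' hz1' (by omega)) (hbnn i)
    calc Bz ≤ ∑' i, b i * z := Summable.tsum_le_tsum h1 hsb (hb1.summable.mul_right z)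
      _ = z := by rw [tsum_mul_right, hb1.tsum_eq, one_mul]
  have hΨznn : 0 ≤ Ψz := tsum_nonneg fun i => mul_nonneg (hψnn i) (pow_nonneg hz0' i)
  have hBznn : 0 ≤ Bz := tsum_nonneg fun i => mul_nonneg (hbnn i) (pow_nonneg hz0' i)
  have hEB1 : 1 ≤ EB := by
    rw [← hb1.tsum_eq, ← hEB.tsum_eq]
    refine Summable.tsum_le_tsum (fun i => ?_) hb1.summable hEB.summable
    rcases Nat.eq_zero_or_pos i with h | h
    · simp [h, hb0]
    · nlinarith [hbnn i, (by exact_mod_cast h : (1:ℝ) ≤ (i:ℝ))]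
  have hEY1 : 1 ≤ EY := by
    rw [← hψ1.tsum_eq, ← hEY.tsum_eq]
    refine Summable.tsum_le_tsum (fun i => ?_) hψ1.summable hEY.summable
    rcases Nat.eq_zero_or_pos i with h | h
    · simp [h, hψ0]
    · nlinarith [hψnn i, (by exact_mod_cast h : (1:ℝ) ≤ (i:ℝ))]
  have hESnn : 0 ≤ ES := by rw [← hES.tsum_eq]; exact tsum_nonneg hann
  have hES0 : 0 < ES := by
    rcases hESnn.lt_or_eq with h | h
    · exact h
    · exfalso; rw [← h] at hρ0; simp at hρ0
  -- norm helpers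
  have habs : ∀ (c : ℕ → ℝ), (∀ i, 0 ≤ c i) → ((fun i => ‖c i‖) = c) :=
    fun c hc => funext fun i => by rw [Real.norm_eq_abs, abs_of_nonneg (hc i)]
  have hψqabs : Summable (fun i => ‖ψ i * z ^ i‖) := by
    rw [habs _ (fun i => mul_nonneg (hψnn i) (pow_nonneg hz0' i))]; exact hsψ
  have haqabs : Summable (fun i => ‖a i * z ^ i‖) := by
    rw [habs _ (fun i => mul_nonneg (hann i) (pow_nonneg hz0' i))]; exact hsa
  -- convolution functions
  set bqt : ℕ → ℝ := fun v => (∑' m : ℕ, b (m + v + 1)) * z ^ v with hbqt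
  set q : ℕ → ℝ := fun k => ∑ i ∈ Finset.range (k+1), (p i * z ^ i) * bqt (k - i) with hqdef
  set g : ℕ → ℝ := fun k => if k = 0 then 0 else (∑' i : ℕ, ψ (i + k + 1)) * z ^ k with hgdef
  set c1 : ℕ → ℝ := fun j => ∑ k ∈ Finset.range (j+1), (ψ k * z ^ k) * (a (j - k) * z ^ (j - k)) with hc1
  set c2 : ℕ → ℝ := fun j => ∑ k ∈ Finset.range (j+1), g k * (a (j - k) * z ^ (j - k)) with hc2
  set c3 : ℕ → ℝ := fun j => ∑ k ∈ Finset.range (j+1), q k * (a (j - k) * z ^ (j - k)) with hc3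
  have hbqtnn : ∀ v, 0 ≤ bqt v := fun v => mul_nonneg (hBbarnn v) (pow_nonneg hz0' v)
  have hpqnn : ∀ i, 0 ≤ p i * z ^ i := fun i => mul_nonneg (hpnn i) (pow_nonneg hz0' i)
  have haqnn : ∀ i, 0 ≤ a i * z ^ i := fun i => mul_nonneg (hann i) (pow_nonneg hz0' i)
  have hqnn : ∀ k, 0 ≤ q k := fun k =>
    Finset.sum_nonneg fun i _ => mul_nonneg (hpqnn i) (hbqtnn _)
  have hgnn : ∀ k, 0 ≤ g k := by
    intro k
    rcases Nat.eq_zero_or_pos k with h | h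
    · simp [hgdef, h]
    · simp only [hgdef, if_neg (by omega : ¬ k = 0)]
      exact mul_nonneg (hΨbarnn k) (pow_nonneg hz0' k)
  have hc1nn : ∀ j, 0 ≤ c1 j := fun j =>
    Finset.sum_nonneg fun k _ => mul_nonneg (mul_nonneg (hψnn k) (pow_nonneg hz0' k)) (haqnn _)
  have hc2nn : ∀ j, 0 ≤ c2 j := fun j =>
    Finset.sum_nonneg fun k _ => mul_nonneg (hgnn k) (haqnn _)
  have hc3nn : ∀ j, 0 ≤ c3 j := fun j =>
    Finset.sum_nonneg fun k _ => mul_nonneg (hqnn k) (haqnn _)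
  -- the decomposition of p j * z^j
  have hdecomp : ∀ j, p j * z ^ j = (1/ET) * c1 j + (1/ET) * c2 j + lam * c3 j := by
    intro j
    rcases Nat.eq_zero_or_pos j with hj | hj
    · subst hj
      simp [hc1, hc2, hc3, hqdef, hgdef, hp0, hψ0, Finset.sum_range_one]
    · have hj1 : 1 ≤ j := hj
      have e1 : c1 j = (∑ s ∈ Finset.Icc 1 j, ψ s * a (j - s)) * z ^ j := by
        simp only [hc1]
        rw [range_succ_sum_eq_Icc _ (by simp [hψ0]) j, Finset.sum_mul]
        refine Finset.sum_congr rfl fun k hk => ?_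
        have hkj : k ≤ j := (Finset.mem_Icc.mp hk).2
        rw [← pow_split z hkj]; ring
      have hc2j : c2 j = ∑ k ∈ Finset.Icc 1 j, (∑' i : ℕ, ψ (i + k + 1)) * a (j - k) * z ^ j := by
        simp only [hc2]
        rw [range_succ_sum_eq_Icc _ (by simp [hgdef]) j]
        refine Finset.sum_congr rfl fun k hk => ?_
        obtain ⟨hk1, hkj⟩ := Finset.mem_Icc.mp hk
        simp only [hgdef, if_neg (by omega : ¬ k = 0)]
        rw [← pow_split z hkj]; ring
      have hqk : ∀ k, q k = (∑ i ∈ Finset.Icc 1 k, p i * (∑' m : ℕ, b (m + (k - i) + 1))) * z ^ k := by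
        intro k
        simp only [hqdef]
        rw [range_succ_sum_eq_Icc _ (by simp [hp0]) k, Finset.sum_mul]
        refine Finset.sum_congr rfl fun i hi => ?_
        obtain ⟨hi1, hik⟩ := Finset.mem_Icc.mp hi
        simp only [hbqt]
        rw [← pow_split z hik]; ring
      have hc3j : c3 j = ∑ k ∈ Finset.Icc 1 j,
          (∑ i ∈ Finset.Icc 1 k, p i * (∑' m : ℕ, b (m + (k - i) + 1))) * a (j - k) * z ^ j := by
        simp only [hc3]
        rw [range_succ_sum_eq_Icc _ (by simp [hqdef, hp0]) j]
        refine Finset.sum_congr rfl fun k hk => ?_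
        obtain ⟨hk1, hkj⟩ := Finset.mem_Icc.mp hk
        rw [hqk k, ← pow_split z hkj]; ring
      have hsplit : (∑ k ∈ Finset.Icc 1 j, a (j - k) *
            ((∑' i : ℕ, ψ (i + k + 1)) / ET
              + lam * ∑ i ∈ Finset.Icc 1 k, p i * (∑' m : ℕ, b (m + (k - i) + 1)))) * z ^ j
          = (1/ET) * (∑ k ∈ Finset.Icc 1 j, (∑' i : ℕ, ψ (i + k + 1)) * a (j - k) * z ^ j)
            + lam * (∑ k ∈ Finset.Icc 1 j,
                (∑ i ∈ Finset.Icc 1 k, p i * (∑' m : ℕ, b (m + (k - i) + 1))) * a (j - k) * z ^ j) := by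
        rw [Finset.sum_mul, Finset.mul_sum, Finset.mul_sum, ← Finset.sum_add_distrib]
        exact Finset.sum_congr rfl fun k hk => by ring
      rw [hrec j hj1, e1, hc2j, hc3j, add_mul, hsplit]
      ring
  -- Cauchy products
  have hsc1 : Summable c1 := by
    simp only [hc1]; exact (summable_norm_sum_mul_range_of_summable_norm hψqabs haqabs).of_norm
  have hc1sum : ∑' j, c1 j = Ψz * Az := by
    simp only [hc1]
    rw [hΨzdef, hAzdef]
    exact (tsum_mul_tsum_eq_tsum_sum_range_of_summable_norm hψqabs haqabs).symm
  have hsg : Summable g := by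
    refine hsTψ.of_nonneg_of_le hgnn fun k => ?_
    rcases Nat.eq_zero_or_pos k with h | h
    · simp only [hgdef, h, if_pos rfl]
      exact mul_nonneg (hΨbarnn 0) (pow_nonneg hz0' 0)
    · simp [hgdef, if_neg (by omega : ¬ k = 0)]
  have hgabs : Summable (fun k => ‖g k‖) := by rw [habs _ hgnn]; exact hsg
  have hsc2 : Summable c2 := by
    simp only [hc2]; exact (summable_norm_sum_mul_range_of_summable_norm hgabs haqabs).of_norm
  have hc2sum : ∑' j, c2 j = (∑' k, g k) * Az := by
    simp only [hc2]
    rw [hAzdef]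
    exact (tsum_mul_tsum_eq_tsum_sum_range_of_summable_norm hgabs haqabs).symm
  have hΨbar0 : (∑' i : ℕ, ψ (i + 0 + 1)) = 1 := by
    have h := Summable.tsum_eq_zero_add hψ1.summable
    rw [hψ1.tsum_eq, hψ0] at h
    simpa using h.symm
  have hGg : (∑' k, g k) = TΨ - 1 := by
    have h1 : TΨ = (∑' i : ℕ, ψ (i + 0 + 1)) * z ^ 0 + ∑' k, (∑' i : ℕ, ψ (i + (k+1) + 1)) * z ^ (k+1) := by
      rw [hTΨdef]; exact Summable.tsum_eq_zero_add hsTψ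
    have h2 : (∑' k, g k) = ∑' k, (∑' i : ℕ, ψ (i + (k+1) + 1)) * z ^ (k+1) := by
      rw [Summable.tsum_eq_zero_add hsg]
      simp only [hgdef]
      simp
    rw [h2, hΨbar0] at *
    rw [h1, hΨbar0]
    ring
  clear_value Az Ψz Bz G TΨ TB bqt q g c1 c2 c3
  -- partial sums of p j z^j are bounded
  have hstep : ∀ n, (∑ j ∈ Finset.range n, p j * z ^ j) ≤
      (1/ET) * (Ψz * Az) + (1/ET) * ((TΨ - 1) * Az)
        + lam * (((∑ j ∈ Finset.range n, p j * z ^ j) * EB) * ES) := by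
    intro n
    have hrw : ∑ j ∈ Finset.range n, p j * z ^ j
        = (1/ET) * (∑ j ∈ Finset.range n, c1 j) + (1/ET) * (∑ j ∈ Finset.range n, c2 j)
          + lam * (∑ j ∈ Finset.range n, c3 j) := by
      rw [Finset.mul_sum, Finset.mul_sum, Finset.mul_sum, ← Finset.sum_add_distrib,
        ← Finset.sum_add_distrib]
      exact Finset.sum_congr rfl fun j _ => hdecomp j
    nth_rewrite 1 [hrw]
    have hb1' : ∑ j ∈ Finset.range n, c1 j ≤ Ψz * Az :=
      (Summable.sum_le_tsum (Finset.range n) (fun j _ => hc1nn j) hsc1).trans_eq hc1sum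
    have hb2' : ∑ j ∈ Finset.range n, c2 j ≤ (TΨ - 1) * Az := by
      rw [← hGg]
      exact (Summable.sum_le_tsum (Finset.range n) (fun j _ => hc2nn j) hsc2).trans_eq hc2sum
    have hSnn : 0 ≤ ∑ j ∈ Finset.range n, p j * z ^ j :=
      Finset.sum_nonneg fun j _ => hpqnn j
    have hb3' : ∑ j ∈ Finset.range n, c3 j ≤ ((∑ j ∈ Finset.range n, p j * z ^ j) * EB) * ES := by
      have s1 : ∑ j ∈ Finset.range n, c3 j
          ≤ (∑ k ∈ Finset.range n, q k) * (∑ u ∈ Finset.range n, a u * z ^ u) := by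
        simp only [hc3]
        exact conv_partial_le q (fun u => a u * z ^ u) hqnn haqnn n
      have s2 : ∑ k ∈ Finset.range n, q k
          ≤ (∑ i ∈ Finset.range n, p i * z ^ i) * (∑ v ∈ Finset.range n, bqt v) := by
        simp only [hqdef]
        exact conv_partial_le (fun i => p i * z ^ i) bqt hpqnn hbqtnn n
      have s3 : ∑ v ∈ Finset.range n, bqt v ≤ EB :=
        (Summable.sum_le_tsum (Finset.range n) (fun v _ => hbqtnn v) hsTb).trans (by rw [← hTBdef]; exact hTBle)
      have s4 : ∑ u ∈ Finset.range n, a u * z ^ u ≤ ES :=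
        (Summable.sum_le_tsum (Finset.range n) (fun u _ => haqnn u) hsa).trans (by rw [← hAzdef]; exact hAzle)
      have hqsnn : 0 ≤ ∑ k ∈ Finset.range n, q k := Finset.sum_nonneg fun k _ => hqnn k
      have haqsnn : 0 ≤ ∑ u ∈ Finset.range n, a u * z ^ u :=
        Finset.sum_nonneg fun u _ => haqnn u
      calc ∑ j ∈ Finset.range n, c3 j
          ≤ (∑ k ∈ Finset.range n, q k) * (∑ u ∈ Finset.range n, a u * z ^ u) := s1
        _ ≤ ((∑ i ∈ Finset.range n, p i * z ^ i) * EB) * ES := by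
            apply mul_le_mul _ s4 haqsnn (by positivity)
            calc ∑ k ∈ Finset.range n, q k
                ≤ (∑ i ∈ Finset.range n, p i * z ^ i) * (∑ v ∈ Finset.range n, bqt v) := s2
              _ ≤ (∑ i ∈ Finset.range n, p i * z ^ i) * EB :=
                  mul_le_mul_of_nonneg_left s3 hSnn
    have hET' : (0:ℝ) < 1/ET := by positivity
    have t1 : (1/ET) * (∑ j ∈ Finset.range n, c1 j) ≤ (1/ET) * (Ψz * Az) :=
      mul_le_mul_of_nonneg_left hb1' hET'.le
    have t2 : (1/ET) * (∑ j ∈ Finset.range n, c2 j) ≤ (1/ET) * ((TΨ - 1) * Az) :=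
      mul_le_mul_of_nonneg_left hb2' hET'.le
    have t3 : lam * (∑ j ∈ Finset.range n, c3 j)
        ≤ lam * (((∑ j ∈ Finset.range n, p j * z ^ j) * EB) * ES) :=
      mul_le_mul_of_nonneg_left hb3' hlam.le
    linarith
  have h1ρ : (0:ℝ) < 1 - lam * ES * EB := by linarith
  have hSle : ∀ n, ∑ j ∈ Finset.range n, p j * z ^ j ≤
      ((1/ET) * (Ψz * Az) + (1/ET) * ((TΨ - 1) * Az)) / (1 - lam * ES * EB) := by
    intro n
    have h := hstep n
    have e : lam * (((∑ j ∈ Finset.range n, p j * z ^ j) * EB) * ES)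
        = (lam * ES * EB) * (∑ j ∈ Finset.range n, p j * z ^ j) := by ring
    rw [e] at h
    rw [le_div_iff₀ h1ρ]
    have e2 : (∑ j ∈ Finset.range n, p j * z ^ j) * (1 - lam * ES * EB)
        = (∑ j ∈ Finset.range n, p j * z ^ j)
          - (lam * ES * EB) * (∑ j ∈ Finset.range n, p j * z ^ j) := by ring
    rw [e2]
    linarith only [h]
  have hsp : Summable (fun j => p j * z ^ j) :=
    summable_of_sum_range_le hpqnn hSle
  have hpqabs : Summable (fun i => ‖p i * z ^ i‖) := by rw [habs _ hpqnn]; exact hsp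
  have hbqtabs : Summable (fun v => ‖bqt v‖) := by rw [habs _ hbqtnn]; exact hsTb
  have hsq : Summable q := by
    simp only [hqdef]; exact (summable_norm_sum_mul_range_of_summable_norm hpqabs hbqtabs).of_norm
  have hqsum : ∑' k, q k = G * TB := by
    simp only [hqdef]
    rw [hGdef, hTBdef]
    exact (tsum_mul_tsum_eq_tsum_sum_range_of_summable_norm hpqabs hbqtabs).symm
  have hqabs : Summable (fun k => ‖q k‖) := by rw [habs _ hqnn]; exact hsq
  have hsc3 : Summable c3 := by
    simp only [hc3]; exact (summable_norm_sum_mul_range_of_summable_norm hqabs haqabs).of_norm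
  have hc3sum : ∑' j, c3 j = (G * TB) * Az := by
    simp only [hc3]; rw [← hqsum, hAzdef]
    exact (tsum_mul_tsum_eq_tsum_sum_range_of_summable_norm hqabs haqabs).symm
  -- the functional equation
  have hGeq : G = (1/ET) * (Ψz * Az) + (1/ET) * ((TΨ - 1) * Az) + lam * ((G * TB) * Az) := by
    calc G = ∑' j, ((1/ET) * c1 j + (1/ET) * c2 j + lam * c3 j) := by
          rw [hGdef]; exact tsum_congr hdecomp
      _ = (1/ET) * (∑' j, c1 j) + (1/ET) * (∑' j, c2 j) + lam * (∑' j, c3 j) := by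
          rw [Summable.tsum_add ((hsc1.mul_left (1/ET)).add (hsc2.mul_left (1/ET))) (hsc3.mul_left lam),
            Summable.tsum_add (hsc1.mul_left (1/ET)) (hsc2.mul_left (1/ET)),
            tsum_mul_left, tsum_mul_left, tsum_mul_left]
      _ = (1/ET) * (Ψz * Az) + (1/ET) * ((TΨ - 1) * Az) + lam * ((G * TB) * Az) := by
          rw [hc1sum, hc2sum, hGg, hc3sum]
  have hG2 : G * ET = Ψz * Az + (TΨ - 1) * Az + lam * ((G * TB) * Az) * ET := by
    conv_lhs => rw [hGeq]
    field_simp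
  have hKey : G * (ET * ((1 - z) - lam * (Az * (1 - Bz)))) = z * Az * (1 - Ψz) := by
    linear_combination (1 - z) * hG2 + Az * hTψ_mul + lam * G * ET * Az * hTb_mul
  have hATB : lam * (Az * TB) ≤ lam * (ES * EB) :=
    mul_le_mul_of_nonneg_left (mul_le_mul hAzle hTBle hTBnn hESnn) hlam.le
  have hre : lam * (Az * (1 - Bz)) = lam * (Az * TB) * (1 - z) := by
    rw [← hTb_mul]; ring
  have h5 : 0 ≤ (1 - z) * (lam * (ES * EB) - lam * (Az * TB)) :=
    mul_nonneg h1z.le (by linarith only [hATB])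
  have h6 : 0 < (1 - z) * (1 - lam * ES * EB) := mul_pos h1z h1ρ
  have hD : 0 < (1 - z) - lam * (Az * (1 - Bz)) := by
    rw [hre]
    nlinarith only [h5, h6]
  have h1B : 0 < 1 - Bz := by linarith only [hBzle, hz1]
  have hEY0 : (0:ℝ) < EY := by linarith only [hEY1]
  have hEB0 : (0:ℝ) < EB := by linarith only [hEB1]
  have hDenom : 1 - lam * Az * (1 - Bz) / (1 - z)
      = ((1 - z) - lam * (Az * (1 - Bz))) / (1 - z) := by
    field_simp
  rw [hDenom]
  have hD' : 1 - z - lam * Az * (1 - Bz) ≠ 0 := by linarith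
  field_simp
  linear_combination (1 - lam * ES * EB) * hKey
end

section
/- Special case B ≡ 1 (single arrivals): if in addition b(1) = 1 (so B(z) = z and EB = 1), then for every z ∈ (0,1), G̃₁(z) = [((1−λ·ES)/(λ·ES))·λ·A(z)·z/(1−λ·A(z))] · [(1−Ψ(z))/(EY·(1−z))], where G̃₁(z) = G₁(z)/p₁ with p₁ = ES·EY/((1−ρ)·ET). -/
set_option maxHeartbeats 1600000 in
/-- Special case `B ≡ 1` (single arrivals): if `b 1 = 1`, then for every
`z ∈ (0,1)`, `G̃₁(z)` is the product of the conditional busy-`M/G/1` PGF and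
the equilibrium PGF of `Y`. -/
theorem stmt_2
    (lam ET : ℝ) (hlam : 0 < lam) (hET : 0 < ET)
    (ψ b a p : ℕ → ℝ)
    (hψ0 : ψ 0 = 0) (hψnn : ∀ i, 0 ≤ ψ i) (hψ1 : HasSum ψ 1)
    (EY : ℝ) (hEY : HasSum (fun i : ℕ => (i : ℝ) * ψ i) EY)
    (hb0 : b 0 = 0) (hbnn : ∀ i, 0 ≤ b i) (hb1 : HasSum b 1)
    (EB : ℝ) (hEB : HasSum (fun i : ℕ => (i : ℝ) * b i) EB)
    (hann : ∀ j, 0 ≤ a j)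
    (ES : ℝ) (hES : HasSum a ES)
    (hρ0 : 0 < lam * ES * EB) (hρ1 : lam * ES * EB < 1)
    (hpnn : ∀ j, 0 ≤ p j) (hp0 : p 0 = 0)
    (hrec : ∀ j, 1 ≤ j → p j =
      (1 / ET) * ∑ s ∈ Finset.Icc 1 j, ψ s * a (j - s)
      + ∑ k ∈ Finset.Icc 1 j, a (j - k) *
          ((∑' i : ℕ, ψ (i + k + 1)) / ET
            + lam * ∑ i ∈ Finset.Icc 1 k, p i * (∑' m : ℕ, b (m + (k - i) + 1))))
    (hb1' : b 1 = 1)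
    (z : ℝ) (hz0 : 0 < z) (hz1 : z < 1) :
    (∑' j : ℕ, p j * z ^ j) / (ES * EY / ((1 - lam * ES * EB) * ET))
      = (((1 - lam * ES) / (lam * ES)) * (lam * (∑' j : ℕ, a j * z ^ j) * z) /
            (1 - lam * (∑' j : ℕ, a j * z ^ j)))
        * ((1 - ∑' i : ℕ, ψ i * z ^ i) / (EY * (1 - z))) := by
  have hznn : (0:ℝ) ≤ z := hz0.le
  have hz1' : (0:ℝ) < 1 - z := by linarith
  have hETne : ET ≠ 0 := ne_of_gt hET
  have hgeo : Summable (fun n : ℕ => z ^ n) := summable_geometric_of_lt_one hznn hz1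
  have hψsum : Summable ψ := hψ1.summable
  have hasum : Summable a := hES.summable
  have hψtsum : (∑' i, ψ i) = 1 := hψ1.tsum_eq
  have hatsum : (∑' j, a j) = ES := hES.tsum_eq
  -- b is a point mass at 1
  have hbz : ∀ i, i ≠ 1 → b i = 0 := by
    intro i hi
    by_contra h
    have hbi : 0 < b i := lt_of_le_of_ne (hbnn i) (Ne.symm h)
    have h2 : (∑ j ∈ ({1, i} : Finset ℕ), b j) ≤ 1 := by
      rw [← hb1.tsum_eq]
      exact Summable.sum_le_tsum _ (fun j _ => hbnn j) hb1.summable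
    rw [Finset.sum_pair (Ne.symm hi), hb1'] at h2
    linarith
  have hEB1 : EB = 1 := by
    refine hEB.unique ?_
    have heq : (fun i : ℕ => (i : ℝ) * b i) = fun i => if i = 1 then (1:ℝ) else 0 := by
      funext i
      by_cases hi : i = 1
      · subst hi; simp [hb1']
      · simp [hbz i hi, hi]
    rw [heq]
    simpa using hasSum_ite_eq (1:ℕ) (1:ℝ)
  rw [hEB1, mul_one] at hρ0 hρ1 ⊢
  have hESpos : 0 < ES := by
    rcases le_or_gt ES 0 with h | h
    · nlinarith
    · exact h
  -- EY ≥ 1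
  have hEY1 : (1:ℝ) ≤ EY := by
    refine hasSum_le (fun i => ?_) hψ1 hEY
    match i with
    | 0 => simp [hψ0]
    | (n+1) =>
      have h := hψnn (n+1)
      have hn : (1:ℝ) ≤ ((n+1 : ℕ) : ℝ) := by exact_mod_cast Nat.succ_le_succ (Nat.zero_le n)
      nlinarith
  have hEYpos : (0:ℝ) < EY := by linarith
  -- tails of ψ
  set Q : ℕ → ℝ := fun k => 1 - ∑ i ∈ Finset.range (k+1), ψ i with hQdef
  have hQtail : ∀ k : ℕ, (∑' i : ℕ, ψ (i + k + 1)) = Q k := by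
    intro k
    have h := Summable.sum_add_tsum_nat_add (f := ψ) (k+1) hψsum
    rw [hψtsum] at h
    have h2 : (∑' i : ℕ, ψ (i + (k+1))) = ∑' i : ℕ, ψ (i + k + 1) :=
      tsum_congr fun i => congrArg ψ (by omega)
    simp only [hQdef]
    linarith [h, h2]
  have hQ0 : Q 0 = 1 := by simp [hQdef, hψ0]
  have hQnn : ∀ k, 0 ≤ Q k := by
    intro k
    have h : ∑ i ∈ Finset.range (k+1), ψ i ≤ 1 := by
      rw [← hψtsum]; exact Summable.sum_le_tsum _ (fun i _ => hψnn i) hψsum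
    simp only [hQdef]; linarith
  have hQle1 : ∀ k, Q k ≤ 1 := by
    intro k
    have h : 0 ≤ ∑ i ∈ Finset.range (k+1), ψ i := Finset.sum_nonneg fun i _ => hψnn i
    simp only [hQdef]; linarith
  have hQstep : ∀ k, Q k - Q (k+1) = ψ (k+1) := by
    intro k
    simp only [hQdef, Finset.sum_range_succ (n := k+1)]
    ring
  -- tails of b
  have htail0 : (∑' m : ℕ, b (m + 0 + 1)) = 1 := by
    have h := Summable.sum_add_tsum_nat_add (f := b) 1 hb1.summable
    rw [hb1.tsum_eq] at h
    simp [hb0] at h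
    simpa using h
  have htail1 : ∀ n : ℕ, 1 ≤ n → (∑' m : ℕ, b (m + n + 1)) = 0 := by
    intro n hn
    have h : (fun m : ℕ => b (m + n + 1)) = fun _ => (0:ℝ) := by
      funext m; exact hbz _ (by omega)
    rw [h, tsum_zero]
  -- convolution form of the recursion
  set F : ℕ → ℝ := fun k => (if k = 0 then 0 else Q k / ET) + lam * p k with hFdef
  have hF0 : F 0 = 0 := by simp [hFdef, hp0]
  have hFnn : ∀ k, 0 ≤ F k := by
    intro k
    have h1 : 0 ≤ (if k = 0 then 0 else Q k / ET) := by
      split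
      · exact le_refl 0
      · exact div_nonneg (hQnn k) hET.le
    have h2 : 0 ≤ lam * p k := mul_nonneg hlam.le (hpnn k)
    simp only [hFdef]; linarith
  have hrec2 : ∀ j, p j = (1/ET) * (∑ s ∈ Finset.range (j+1), ψ s * a (j-s))
      + ∑ k ∈ Finset.range (j+1), F k * a (j-k) := by
    intro j
    rcases Nat.eq_zero_or_pos j with rfl | hj
    · simp [hp0, hψ0, hF0]
    · have hrj := hrec j hj
      have hinner : ∀ k ∈ Finset.Icc 1 j, a (j - k) *
          ((∑' i : ℕ, ψ (i + k + 1)) / ET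
            + lam * ∑ i ∈ Finset.Icc 1 k, p i * (∑' m : ℕ, b (m + (k - i) + 1)))
          = F k * a (j-k) := by
        intro k hk
        obtain ⟨hk1, hkj⟩ := Finset.mem_Icc.mp hk
        have hin : (∑ i ∈ Finset.Icc 1 k, p i * (∑' m : ℕ, b (m + (k - i) + 1))) = p k := by
          rw [Finset.sum_eq_single_of_mem k (Finset.mem_Icc.mpr ⟨hk1, le_refl k⟩)]
          · rw [Nat.sub_self, htail0, mul_one]
          · intro i hi hik
            obtain ⟨hi1, hik'⟩ := Finset.mem_Icc.mp hi
            rw [htail1 (k - i) (by omega), mul_zero]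
        rw [hin, hQtail k]
        simp only [hFdef, if_neg (by omega : ¬ k = 0)]
        ring
      rw [Finset.sum_congr rfl hinner] at hrj
      have hins : Finset.range (j+1) = insert 0 (Finset.Icc 1 j) := by
        ext x
        simp only [Finset.mem_range, Finset.mem_insert, Finset.mem_Icc]
        omega
      have h0 : (0:ℕ) ∉ Finset.Icc 1 j := by simp
      rw [hins, Finset.sum_insert h0, Finset.sum_insert h0, hψ0, hF0, hrj]
      ring
  -- reflection of range sums
  have hrefl : ∀ (f : ℕ → ℝ) (j : ℕ),
      ∑ s ∈ Finset.range (j+1), f (j - s) = ∑ s ∈ Finset.range (j+1), f s := by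
    intro f j
    have h := Finset.sum_range_reflect f (j+1)
    simpa using h
  -- uniform bound on p
  set C : ℝ := (2 * ES / ET) / (1 - lam * ES) with hCdef
  have hCnn : 0 ≤ C := by
    apply div_nonneg
    · positivity
    · linarith
  have h1mES : (0:ℝ) < 1 - lam * ES := by linarith
  have hCid : C * (1 - lam * ES) = 2 * ES / ET := by
    rw [hCdef]
    exact div_mul_cancel₀ _ (ne_of_gt h1mES)
  have ha0ES : a 0 ≤ ES := by
    rw [← hatsum]; exact Summable.le_tsum hasum 0 (fun j _ => hann j)
  have haleES : ∀ (s : Finset ℕ), ∑ i ∈ s, a i ≤ ES := by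
    intro s; rw [← hatsum]; exact Summable.sum_le_tsum s (fun i _ => hann i) hasum
  have hψle1 : ∀ i, ψ i ≤ 1 := by
    intro i; rw [← hψtsum]; exact Summable.le_tsum hψsum i (fun j _ => hψnn j)
  have hpC : ∀ j, p j ≤ C := by
    intro j
    induction j using Nat.strong_induction_on with
    | _ j ih =>
      have hS1 : (∑ s ∈ Finset.range (j+1), ψ s * a (j-s)) ≤ ES := by
        calc (∑ s ∈ Finset.range (j+1), ψ s * a (j-s))
            ≤ ∑ s ∈ Finset.range (j+1), a (j-s) := by
              refine Finset.sum_le_sum fun s _ => ?_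
              nlinarith [hψle1 s, hψnn s, hann (j - s)]
          _ = ∑ s ∈ Finset.range (j+1), a s := hrefl a j
          _ ≤ ES := haleES _
      have hS2 : (∑ k ∈ Finset.range (j+1), (if k = 0 then 0 else Q k / ET) * a (j-k))
          ≤ ES / ET := by
        calc (∑ k ∈ Finset.range (j+1), (if k = 0 then 0 else Q k / ET) * a (j-k))
            ≤ ∑ k ∈ Finset.range (j+1), (1/ET) * a (j-k) := by
              refine Finset.sum_le_sum fun k _ => ?_
              have hq : (if k = 0 then 0 else Q k / ET) ≤ 1/ET := by
                split
                · positivity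
                · exact div_le_div_iff_of_pos_right hET |>.mpr (hQle1 _)
              exact mul_le_mul_of_nonneg_right hq (hann _)
          _ = (1/ET) * ∑ k ∈ Finset.range (j+1), a (j-k) := by rw [Finset.mul_sum]
          _ = (1/ET) * ∑ k ∈ Finset.range (j+1), a k := by rw [hrefl a j]
          _ ≤ (1/ET) * ES := by
              have h1 := haleES (Finset.range (j+1))
              have h2 : (0:ℝ) ≤ 1/ET := by positivity
              nlinarith
          _ = ES / ET := by ring
      have hsplit : ∑ k ∈ Finset.range (j+1), F k * a (j-k)
          = (∑ k ∈ Finset.range (j+1), (if k = 0 then 0 else Q k / ET) * a (j-k))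
            + lam * ∑ k ∈ Finset.range (j+1), p k * a (j-k) := by
        rw [Finset.mul_sum, ← Finset.sum_add_distrib]
        refine Finset.sum_congr rfl fun k _ => ?_
        simp only [hFdef]; ring
      have h4 : ∑ k ∈ Finset.range j, a (j-k) ≤ ES - a 0 := by
        have h5 : ∑ k ∈ Finset.range (j+1), a (j-k) ≤ ES := by
          rw [hrefl a j]; exact haleES _
        rw [Finset.sum_range_succ, Nat.sub_self] at h5
        linarith
      have h3 : ∑ k ∈ Finset.range j, p k * a (j-k) ≤ C * (ES - a 0) := by
        calc ∑ k ∈ Finset.range j, p k * a (j-k)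
            ≤ ∑ k ∈ Finset.range j, C * a (j-k) :=
              Finset.sum_le_sum fun k hk =>
                mul_le_mul_of_nonneg_right (ih k (Finset.mem_range.mp hk)) (hann _)
          _ = C * ∑ k ∈ Finset.range j, a (j-k) := by rw [Finset.mul_sum]
          _ ≤ C * (ES - a 0) := mul_le_mul_of_nonneg_left h4 hCnn
      have hlast : ∑ k ∈ Finset.range (j+1), p k * a (j-k)
          = (∑ k ∈ Finset.range j, p k * a (j-k)) + p j * a 0 := by
        rw [Finset.sum_range_succ, Nat.sub_self]
      have hbound : p j ≤ 2*ES/ET + lam * (C * (ES - a 0)) + lam * (a 0 * p j) := by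
        have h6 := hrec2 j
        rw [hsplit, hlast] at h6
        have h7 : (1/ET) * (∑ s ∈ Finset.range (j+1), ψ s * a (j-s)) ≤ ES/ET := by
          have h8 : (0:ℝ) ≤ 1/ET := by positivity
          have h9 : (0:ℝ) ≤ ∑ s ∈ Finset.range (j+1), ψ s * a (j-s) :=
            Finset.sum_nonneg fun s _ => mul_nonneg (hψnn s) (hann _)
          calc (1/ET) * (∑ s ∈ Finset.range (j+1), ψ s * a (j-s))
              ≤ (1/ET) * ES := mul_le_mul_of_nonneg_left hS1 h8
            _ = ES/ET := by ring
        have h10 : lam * ((∑ k ∈ Finset.range j, p k * a (j-k)) + p j * a 0)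
            ≤ lam * (C * (ES - a 0)) + lam * (a 0 * p j) := by
          have h11 : (∑ k ∈ Finset.range j, p k * a (j-k)) + p j * a 0
              ≤ C * (ES - a 0) + a 0 * p j := by linarith [h3]
          have h12 := mul_le_mul_of_nonneg_left h11 hlam.le
          have h13 : lam * (C * (ES - a 0) + a 0 * p j)
              = lam * (C * (ES - a 0)) + lam * (a 0 * p j) := by ring
          linarith [h12, h13]
        calc p j = (1/ET) * (∑ s ∈ Finset.range (j+1), ψ s * a (j-s))
              + ((∑ k ∈ Finset.range (j+1), (if k = 0 then 0 else Q k / ET) * a (j-k))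
                + lam * ((∑ k ∈ Finset.range j, p k * a (j-k)) + p j * a 0)) := h6
          _ ≤ ES/ET + (ES/ET + (lam * (C * (ES - a 0)) + lam * (a 0 * p j))) := by
              have := add_le_add (add_le_add hS2 h10) h7
              linarith
          _ = 2*ES/ET + lam * (C * (ES - a 0)) + lam * (a 0 * p j) := by ring
      have hx : 0 < 1 - lam * a 0 := by
        have h14 := mul_le_mul_of_nonneg_left ha0ES hlam.le
        linarith
      have hy : p j * (1 - lam * a 0) ≤ C * (1 - lam * a 0) := by
        linarith [hbound, hCid]
      exact le_of_mul_le_mul_right hy hx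
  -- summability of all the power series
  have hpz : Summable (fun j : ℕ => p j * z^j) := by
    refine Summable.of_nonneg_of_le (fun j => mul_nonneg (hpnn j) (pow_nonneg hznn j))
      (fun j => mul_le_mul_of_nonneg_right (hpC j) (pow_nonneg hznn j)) (hgeo.mul_left C)
  have hψz : Summable (fun i : ℕ => ψ i * z^i) := by
    refine Summable.of_nonneg_of_le (fun i => mul_nonneg (hψnn i) (pow_nonneg hznn i))
      (fun i => ?_) hψsum
    nlinarith [pow_le_one₀ hznn hz1.le (n := i), hψnn i, pow_nonneg hznn i]
  have haz : Summable (fun j : ℕ => a j * z^j) := by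
    refine Summable.of_nonneg_of_le (fun j => mul_nonneg (hann j) (pow_nonneg hznn j))
      (fun j => ?_) hasum
    nlinarith [pow_le_one₀ hznn hz1.le (n := j), hann j, pow_nonneg hznn j]
  have hQz : Summable (fun k : ℕ => Q k * z^k) := by
    refine Summable.of_nonneg_of_le (fun k => mul_nonneg (hQnn k) (pow_nonneg hznn k))
      (fun k => mul_le_mul_of_nonneg_right (hQle1 k) (pow_nonneg hznn k)) ?_
    simpa using hgeo
  have hFb : ∀ k, F k ≤ 1/ET + lam * C := by
    intro k
    have h1 : (if k = 0 then 0 else Q k / ET) ≤ 1/ET := by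
      split
      · positivity
      · exact div_le_div_iff_of_pos_right hET |>.mpr (hQle1 _)
    have h2 : lam * p k ≤ lam * C := mul_le_mul_of_nonneg_left (hpC k) hlam.le
    simp only [hFdef]; linarith
  have hFz : Summable (fun k : ℕ => F k * z^k) := by
    refine Summable.of_nonneg_of_le (fun k => mul_nonneg (hFnn k) (pow_nonneg hznn k))
      (fun k => mul_le_mul_of_nonneg_right (hFb k) (pow_nonneg hznn k))
      (hgeo.mul_left _)
  -- norm summability
  have hnorm : ∀ (f : ℕ → ℝ), (∀ i, 0 ≤ f i) → Summable f → Summable (fun i => ‖f i‖) := by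
    intro f hf hs
    have h : (fun i => ‖f i‖) = f := funext fun i => Real.norm_of_nonneg (hf i)
    rw [h]; exact hs
  have hψzn := hnorm _ (fun i => mul_nonneg (hψnn i) (pow_nonneg hznn i)) hψz
  have hazn := hnorm _ (fun j => mul_nonneg (hann j) (pow_nonneg hznn j)) haz
  have hFzn := hnorm _ (fun k => mul_nonneg (hFnn k) (pow_nonneg hznn k)) hFz
  -- Cauchy products
  have hconv : ∀ (f g : ℕ → ℝ) (j : ℕ),
      ∑ s ∈ Finset.range (j+1), (f s * z^s) * (g (j-s) * z^(j-s))
        = (∑ s ∈ Finset.range (j+1), f s * g (j-s)) * z^j := by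
    intro f g j
    rw [Finset.sum_mul]
    refine Finset.sum_congr rfl fun s hs => ?_
    have hsj : s ≤ j := Nat.lt_succ_iff.mp (Finset.mem_range.mp hs)
    have hzz : z^s * z^(j-s) = z^j := by rw [← pow_add, Nat.add_sub_cancel' hsj]
    calc (f s * z^s) * (g (j-s) * z^(j-s)) = f s * g (j-s) * (z^s * z^(j-s)) := by ring
      _ = f s * g (j-s) * z^j := by rw [hzz]
  have hkey : ∀ j : ℕ, p j * z^j
      = (1/ET) * (∑ s ∈ Finset.range (j+1), (ψ s * z^s) * (a (j-s) * z^(j-s)))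
        + ∑ k ∈ Finset.range (j+1), (F k * z^k) * (a (j-k) * z^(j-k)) := by
    intro j
    rw [hconv ψ a j, hconv F a j, hrec2 j]
    ring
  have hS1sum : Summable (fun j : ℕ =>
      ∑ s ∈ Finset.range (j+1), (ψ s * z^s) * (a (j-s) * z^(j-s))) :=
    (summable_norm_sum_mul_range_of_summable_norm hψzn hazn).of_norm
  have hS2sum : Summable (fun j : ℕ =>
      ∑ k ∈ Finset.range (j+1), (F k * z^k) * (a (j-k) * z^(j-k))) :=
    (summable_norm_sum_mul_range_of_summable_norm hFzn hazn).of_norm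
  have hPz_eq : (∑' j : ℕ, p j * z^j)
      = (1/ET) * ((∑' i : ℕ, ψ i * z^i) * (∑' j : ℕ, a j * z^j))
        + (∑' k : ℕ, F k * z^k) * (∑' j : ℕ, a j * z^j) := by
    rw [tsum_congr hkey, Summable.tsum_add (hS1sum.mul_left (1/ET)) hS2sum, tsum_mul_left,
      ← tsum_mul_tsum_eq_tsum_sum_range_of_summable_norm hψzn hazn,
      ← tsum_mul_tsum_eq_tsum_sum_range_of_summable_norm hFzn hazn]
  -- F generating function
  have hifs : Summable (fun k : ℕ => (if k = 0 then 0 else Q k / ET) * z^k) := by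
    refine Summable.of_nonneg_of_le (fun k => ?_) (fun k => ?_) (hgeo.mul_left (1/ET))
    · refine mul_nonneg ?_ (pow_nonneg hznn k)
      split
      · exact le_refl 0
      · exact div_nonneg (hQnn k) hET.le
    · refine mul_le_mul_of_nonneg_right ?_ (pow_nonneg hznn k)
      split
      · positivity
      · exact div_le_div_iff_of_pos_right hET |>.mpr (hQle1 _)
  have hQz1 : Summable (fun k : ℕ => Q (k+1) * z^(k+1)) := (summable_nat_add_iff 1).2 hQz
  have hψz1 : Summable (fun k : ℕ => ψ (k+1) * z^(k+1)) := (summable_nat_add_iff 1).2 hψz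
  have hTz0 : (∑' k : ℕ, Q k * z^k) = 1 + ∑' k : ℕ, Q (k+1) * z^(k+1) := by
    rw [Summable.tsum_eq_zero_add hQz, hQ0]
    norm_num
  have hFz_eq : (∑' k : ℕ, F k * z^k)
      = (1/ET) * ((∑' k : ℕ, Q k * z^k) - 1) + lam * (∑' j : ℕ, p j * z^j) := by
    have e0 : (∑' k : ℕ, F k * z^k)
        = ∑' k : ℕ, ((if k = 0 then 0 else Q k / ET) * z^k + lam * (p k * z^k)) := by
      refine tsum_congr fun k => ?_
      simp only [hFdef]; ring
    rw [e0, Summable.tsum_add hifs (hpz.mul_left lam), tsum_mul_left]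
    have e1 : (∑' k : ℕ, (if k = 0 then 0 else Q k / ET) * z^k)
        = (1/ET) * ∑' k : ℕ, Q (k+1) * z^(k+1) := by
      have e1' : ∀ k : ℕ, (if k + 1 = 0 then 0 else Q (k+1) / ET) * z^(k+1)
          = (1/ET) * (Q (k+1) * z^(k+1)) := fun k => by
        rw [if_neg (Nat.succ_ne_zero k)]; ring
      rw [Summable.tsum_eq_zero_add hifs, tsum_congr e1', tsum_mul_left]
      norm_num
    rw [e1]
    have e3 : (∑' k : ℕ, Q (k+1) * z^(k+1)) = (∑' k : ℕ, Q k * z^k) - 1 := by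
      linarith [hTz0]
    rw [e3]
  -- equilibrium identity
  have hTz_eq : (1 - z) * (∑' k : ℕ, Q k * z^k) = 1 - (∑' i : ℕ, ψ i * z^i) := by
    have hΨshift : (∑' i : ℕ, ψ i * z^i) = ∑' k : ℕ, ψ (k+1) * z^(k+1) := by
      rw [Summable.tsum_eq_zero_add hψz, hψ0]
      norm_num
    have hsum2 : (∑' k : ℕ, Q (k+1) * z^(k+1)) + (∑' k : ℕ, ψ (k+1) * z^(k+1))
        = z * (∑' k : ℕ, Q k * z^k) := by
      have e2' : ∀ k : ℕ, Q (k+1) * z^(k+1) + ψ (k+1) * z^(k+1)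
          = z * (Q k * z^k) := fun k => by
        have h := hQstep k
        have hψk : ψ (k+1) = Q k - Q (k+1) := by linarith
        rw [hψk]; ring
      rw [← Summable.tsum_add hQz1 hψz1, tsum_congr e2', tsum_mul_left]
    have e3 : (∑' k : ℕ, Q (k+1) * z^(k+1)) = (∑' k : ℕ, Q k * z^k) - 1 := by
      linarith [hTz0]
    rw [hΨshift]
    linarith [hsum2, e3]
  -- combine everything
  have hu : ET * (1/ET) = 1 := by field_simp
  have key : (∑' j : ℕ, p j * z^j) * ((1 - lam * (∑' j : ℕ, a j * z^j)) * (ET * (1-z)))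
      = (∑' j : ℕ, a j * z^j) * z * (1 - (∑' i : ℕ, ψ i * z^i)) := by
    linear_combination (ET*(1-z)) * hPz_eq + (ET*(1-z)*(∑' j : ℕ, a j * z^j)) * hFz_eq
      + (∑' j : ℕ, a j * z^j) * hTz_eq
      + ((1-z)*(∑' i : ℕ, ψ i * z^i)*(∑' j : ℕ, a j * z^j)
          + (1-z)*(∑' j : ℕ, a j * z^j)*((∑' k : ℕ, Q k * z^k) - 1)) * hu
  -- final algebra
  have hAzle : (∑' j : ℕ, a j * z^j) ≤ ES := by
    rw [← hatsum]
    refine Summable.tsum_le_tsum (fun j => ?_) haz hasum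
    nlinarith [pow_le_one₀ hznn hz1.le (n := j), hann j, pow_nonneg hznn j]
  have h1mAz : 0 < 1 - lam * (∑' j : ℕ, a j * z^j) := by
    have h15 := mul_le_mul_of_nonneg_left hAzle hlam.le
    linarith
  have hdenne : ((1 - lam * (∑' j : ℕ, a j * z^j)) * (ET * (1-z))) ≠ 0 :=
    ne_of_gt (mul_pos h1mAz (mul_pos hET hz1'))
  have hPform : (∑' j : ℕ, p j * z^j)
      = (∑' j : ℕ, a j * z^j) * z * (1 - (∑' i : ℕ, ψ i * z^i))
        / ((1 - lam * (∑' j : ℕ, a j * z^j)) * (ET * (1-z))) := by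
    rw [eq_div_iff hdenne]
    exact key
  rw [hPform]
  have hESne : ES ≠ 0 := ne_of_gt hESpos
  have hEYne : EY ≠ 0 := ne_of_gt hEYpos
  have hlamne : lam ≠ 0 := ne_of_gt hlam
  have h1mESne : (1:ℝ) - lam * ES ≠ 0 := ne_of_gt h1mES
  have h1mAzne : (1:ℝ) - lam * (∑' j : ℕ, a j * z^j) ≠ 0 := ne_of_gt h1mAz
  have h1zne : (1:ℝ) - z ≠ 0 := ne_of_gt hz1'
  field_simp
end

section
/- Special case Y distributed as B: if in addition ψ = b (so Ψ = B and EY = EB), then for every z ∈ (0,1), G̃₁(z) = P̃₁(z), where G̃₁(z) = G₁(z)/p₁ with p₁ = ES·EB/((1−ρ)·ET), and P̃₁(z) = ((1−ρ)/(λ·ES))·λ·z·A(z)·(1−B(z))/(EB·(1−z))/(1 − λ·A(z)·(1−B(z))/(1−z)). -/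
private lemma sum_range_succ_eq_icc (f : ℕ → ℝ) (j : ℕ) (h0 : f 0 = 0) :
    ∑ k ∈ Finset.range (j + 1), f k = ∑ k ∈ Finset.Icc 1 j, f k := by
  have h : Finset.range (j + 1) = insert 0 (Finset.Icc 1 j) := by
    ext x; simp [Finset.mem_range, Finset.mem_Icc]; omega
  rw [h, Finset.sum_insert (by simp), h0, zero_add]

private lemma conv_swap (F G : ℕ → ℝ) (N : ℕ) :
    ∑ j ∈ Finset.range N, ∑ k ∈ Finset.range (j + 1), F k * G (j - k)
      = ∑ k ∈ Finset.range N, F k * ∑ m ∈ Finset.range (N - k), G m := by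
  induction N with
  | zero => simp
  | succ N ih =>
    rw [Finset.sum_range_succ, ih]
    have h1 : ∀ k ∈ Finset.range N, F k * ∑ m ∈ Finset.range (N + 1 - k), G m
        = F k * ∑ m ∈ Finset.range (N - k), G m + F k * G (N - k) := by
      intro k hk
      have hk' : k ≤ N := le_of_lt (Finset.mem_range.mp hk)
      rw [Nat.succ_sub hk', Finset.sum_range_succ, mul_add]
    rw [Finset.sum_range_succ (fun k => F k * ∑ m ∈ Finset.range (N + 1 - k), G m),
      Finset.sum_congr rfl h1, Finset.sum_add_distrib,
      Finset.sum_range_succ (fun k => F k * G (N - k))]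
    have h3 : N + 1 - N = 1 := by omega
    rw [h3, Nat.sub_self, Finset.sum_range_one]
    ring

private lemma conv_partial_le_s4 (F G : ℕ → ℝ) (hF : ∀ n, 0 ≤ F n) (hG : ∀ n, 0 ≤ G n)
    (hGs : Summable G) (N : ℕ) :
    ∑ j ∈ Finset.range N, ∑ k ∈ Finset.range (j + 1), F k * G (j - k)
      ≤ (∑ k ∈ Finset.range N, F k) * ∑' m, G m := by
  rw [conv_swap]
  calc ∑ k ∈ Finset.range N, F k * ∑ m ∈ Finset.range (N - k), G m
      ≤ ∑ k ∈ Finset.range N, F k * ∑' m, G m := by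
        refine Finset.sum_le_sum fun k _ => ?_
        exact mul_le_mul_of_nonneg_left (Summable.sum_le_tsum _ (fun i _ => hG i) hGs) (hF k)
    _ = (∑ k ∈ Finset.range N, F k) * ∑' m, G m := by rw [Finset.sum_mul]

private lemma hasSum_conv {f g : ℕ → ℝ} (hf : Summable f) (hg : Summable g) :
    HasSum (fun j => ∑ k ∈ Finset.range (j + 1), f k * g (j - k)) ((∑' n, f n) * ∑' n, g n) :=
  hasSum_sum_range_mul_of_summable_norm (summable_norm_iff.mpr hf) (summable_norm_iff.mpr hg)

private lemma one_sub_pow_le' (z : ℝ) (h0 : 0 ≤ z) (h1 : z ≤ 1) : ∀ n : ℕ, 1 - z ^ n ≤ n * (1 - z)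
  | 0 => by simp
  | (n + 1) => by
    have ih := one_sub_pow_le' z h0 h1 n
    have hz : z ^ n ≤ 1 := pow_le_one₀ h0 h1
    have hzn : (0:ℝ) ≤ n := Nat.cast_nonneg n
    rw [pow_succ]
    push_cast
    nlinarith [mul_le_mul_of_nonneg_left ih h0,
      mul_nonneg (mul_nonneg hzn (by linarith : (0:ℝ) ≤ 1 - z)) (by linarith : (0:ℝ) ≤ 1 - z)]

private lemma div_cancel_aux (x w u : ℝ) (hw : w ≠ 0) : 1 - x * (w * u) / w = 1 - x * u := by
  field_simp

private lemma div_cancel_aux2 (w u E : ℝ) (hw : w ≠ 0) (hE : E ≠ 0) : w * u / (E * w) = u / E := by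
  rw [div_eq_div_iff (mul_ne_zero hE hw) hE]
  ring

private lemma final_algebra (lam ET ES EB Az TB z G : ℝ) (hET : ET ≠ 0) (hES : ES ≠ 0)
    (hEB : EB ≠ 0) (hlam : lam ≠ 0) (hne1 : 1 - lam * ES * EB ≠ 0)
    (hne2 : 1 - lam * Az * TB ≠ 0) :
    Az * z * TB / (ET * (1 - lam * Az * TB)) / (ES * EB / ((1 - lam * ES * EB) * ET))
      = (1 - lam * ES * EB) / (lam * ES) * (lam * z * Az * (TB / EB)) / (1 - lam * Az * TB) := by
  field_simp

set_option maxHeartbeats 1000000 in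
/-- Special case `Y` distributed as `B`: if `ψ = b` then for every `z ∈ (0,1)`,
`G̃₁(z) = P̃₁(z)`, the conditional PGF of the busy `M^X/G/1` queue. -/
theorem stmt_4
    (lam ET : ℝ) (hlam : 0 < lam) (hET : 0 < ET)
    (ψ b a p : ℕ → ℝ)
    (hψ0 : ψ 0 = 0) (hψnn : ∀ i, 0 ≤ ψ i) (hψ1 : HasSum ψ 1)
    (EY : ℝ) (hEY : HasSum (fun i : ℕ => (i : ℝ) * ψ i) EY)
    (hb0 : b 0 = 0) (hbnn : ∀ i, 0 ≤ b i) (hb1 : HasSum b 1)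
    (EB : ℝ) (hEB : HasSum (fun i : ℕ => (i : ℝ) * b i) EB)
    (hann : ∀ j, 0 ≤ a j)
    (ES : ℝ) (hES : HasSum a ES)
    (hρ0 : 0 < lam * ES * EB) (hρ1 : lam * ES * EB < 1)
    (hpnn : ∀ j, 0 ≤ p j) (hp0 : p 0 = 0)
    (hrec : ∀ j, 1 ≤ j → p j =
      (1 / ET) * ∑ s ∈ Finset.Icc 1 j, ψ s * a (j - s)
      + ∑ k ∈ Finset.Icc 1 j, a (j - k) *
          ((∑' i : ℕ, ψ (i + k + 1)) / ET
            + lam * ∑ i ∈ Finset.Icc 1 k, p i * (∑' m : ℕ, b (m + (k - i) + 1))))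
    (hψb : ψ = b)
    (z : ℝ) (hz0 : 0 < z) (hz1 : z < 1) :
    (∑' j : ℕ, p j * z ^ j) / (ES * EB / ((1 - lam * ES * EB) * ET))
      = ((1 - lam * ES * EB) / (lam * ES)) *
          (lam * z * (∑' j : ℕ, a j * z ^ j) *
            ((1 - ∑' i : ℕ, b i * z ^ i) / (EB * (1 - z)))) /
          (1 - lam * (∑' j : ℕ, a j * z ^ j) *
            (1 - ∑' i : ℕ, b i * z ^ i) / (1 - z)) := by
  rw [hψb] at hrec
  have hz0' : (0:ℝ) ≤ z := le_of_lt hz0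
  have hzle : z ≤ 1 := le_of_lt hz1
  have hz1' : (0:ℝ) < 1 - z := by linarith
  have hESnn : 0 ≤ ES := by rw [← hES.tsum_eq]; exact tsum_nonneg hann
  have hEBnn : 0 ≤ EB := by
    rw [← hEB.tsum_eq]
    exact tsum_nonneg fun i => mul_nonneg (Nat.cast_nonneg i) (hbnn i)
  have hES0 : 0 < ES := by nlinarith [mul_nonneg hlam.le hEBnn]
  have hEB0 : 0 < EB := by nlinarith [mul_nonneg hlam.le hESnn]
  set Az := ∑' j : ℕ, a j * z ^ j with hAzd
  set Bz := ∑' i : ℕ, b i * z ^ i with hBzd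
  clear_value Az Bz
  have hgeom : Summable fun n : ℕ => z ^ n := summable_geometric_of_lt_one hz0' hz1
  have hmulz : ∀ c : ℕ → ℝ, (∀ i, 0 ≤ c i) → Summable c → Summable fun i => c i * z ^ i := by
    intro c hc hs
    refine Summable.of_nonneg_of_le (fun i => mul_nonneg (hc i) (pow_nonneg hz0' i))
      (fun i => ?_) hs
    calc c i * z ^ i ≤ c i * 1 := mul_le_mul_of_nonneg_left (pow_le_one₀ hz0' hzle) (hc i)
      _ = c i := mul_one _
  -- abstracted coefficient sequences
  obtain ⟨aq, haq⟩ : ∃ f : ℕ → ℝ, ∀ j, f j = a j * z ^ j := ⟨_, fun _ => rfl⟩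
  obtain ⟨bq, hbq⟩ : ∃ f : ℕ → ℝ, ∀ i, f i = b i * z ^ i := ⟨_, fun _ => rfl⟩
  obtain ⟨q, hq⟩ : ∃ f : ℕ → ℝ, ∀ j, f j = p j * z ^ j := ⟨_, fun _ => rfl⟩
  obtain ⟨Bb, hBb⟩ : ∃ f : ℕ → ℝ, ∀ k, f k = ∑' m : ℕ, b (m + k + 1) := ⟨_, fun _ => rfl⟩
  have haqnn : ∀ j, 0 ≤ aq j := fun j => (haq j) ▸ mul_nonneg (hann j) (pow_nonneg hz0' j)
  have hbqnn : ∀ i, 0 ≤ bq i := fun i => (hbq i) ▸ mul_nonneg (hbnn i) (pow_nonneg hz0' i)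
  have hqnn : ∀ j, 0 ≤ q j := fun j => (hq j) ▸ mul_nonneg (hpnn j) (pow_nonneg hz0' j)
  have hq0 : q 0 = 0 := by rw [hq 0, hp0, zero_mul]
  have hSaq : Summable aq := (hmulz a hann hES.summable).congr fun j => (haq j).symm
  have hSbq : Summable bq := (hmulz b hbnn hb1.summable).congr fun i => (hbq i).symm
  have hAzt : (∑' j, aq j) = Az := by rw [hAzd]; exact tsum_congr fun j => haq j
  have hBzt : (∑' i, bq i) = Bz := by rw [hBzd]; exact tsum_congr fun i => hbq i
  have hAznn : 0 ≤ Az := by rw [← hAzt]; exact tsum_nonneg haqnn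
  have hAzle : Az ≤ ES := by
    rw [← hAzt, ← hES.tsum_eq]
    refine Summable.tsum_le_tsum (fun j => ?_) hSaq hES.summable
    rw [haq j]
    calc a j * z ^ j ≤ a j * 1 := mul_le_mul_of_nonneg_left (pow_le_one₀ hz0' hzle) (hann j)
      _ = a j := mul_one _
  have hBzle : Bz ≤ 1 := by
    rw [← hBzt, ← hb1.tsum_eq]
    refine Summable.tsum_le_tsum (fun i => ?_) hSbq hb1.summable
    rw [hbq i]
    calc b i * z ^ i ≤ b i * 1 := mul_le_mul_of_nonneg_left (pow_le_one₀ hz0' hzle) (hbnn i)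
      _ = b i := mul_one _
  -- tails of b
  have hSbk : ∀ k : ℕ, Summable fun m => b (m + k + 1) := by
    intro k
    exact (hb1.summable.comp_injective
      (fun m n h => by simpa using h : Function.Injective fun m : ℕ => m + k + 1))
  have hBbnn : ∀ k, 0 ≤ Bb k := fun k => (hBb k) ▸ tsum_nonneg fun m => hbnn _
  have hBble : ∀ k, Bb k ≤ 1 := by
    intro k
    rw [hBb k, ← hb1.tsum_eq]
    exact Summable.tsum_le_tsum_of_inj (fun m => m + k + 1) (fun m n h => by simpa using h)
      (fun c _ => hbnn c) (fun m => le_rfl) (hSbk k) hb1.summable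
  have hBbrec : ∀ k, Bb k = b (k + 1) + Bb (k + 1) := by
    intro k
    rw [hBb k, hBb (k + 1), Summable.tsum_eq_zero_add (hSbk k)]
    congr 1
    · congr 1; omega
    · exact tsum_congr fun m => by congr 1; omega
  have hBb0 : Bb 0 = 1 := by
    have h := Summable.tsum_eq_zero_add hb1.summable
    rw [hb1.tsum_eq, hb0, zero_add] at h
    rw [hBb 0, ← h]
  obtain ⟨Bbq, hBbq⟩ : ∃ f : ℕ → ℝ, ∀ k, f k = Bb k * z ^ k := ⟨_, fun _ => rfl⟩
  have hBbqnn : ∀ k, 0 ≤ Bbq k := fun k => (hBbq k) ▸ mul_nonneg (hBbnn k) (pow_nonneg hz0' k)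
  have hSBbq : Summable Bbq := by
    refine Summable.of_nonneg_of_le hBbqnn (fun k => ?_) hgeom
    rw [hBbq k]
    calc Bb k * z ^ k ≤ 1 * z ^ k :=
          mul_le_mul_of_nonneg_right (hBble k) (pow_nonneg hz0' k)
      _ = z ^ k := one_mul _
  obtain ⟨TB, hTBd⟩ : ∃ t : ℝ, t = ∑' k, Bbq k := ⟨_, rfl⟩
  have hTBnn : 0 ≤ TB := hTBd ▸ tsum_nonneg hBbqnn
  have hTBsplit : TB = 1 + ∑' k, Bbq (k + 1) := by
    rw [hTBd, Summable.tsum_eq_zero_add hSBbq, hBbq 0, hBb0, pow_zero, mul_one]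
  have hSb1 : Summable fun k => b (k + 1) * z ^ (k + 1) :=
    hSbq.comp_injective Nat.succ_injective |>.congr fun k => by rw [Function.comp_apply, hbq]
  have hSBbq1 : Summable fun k => Bbq (k + 1) := hSBbq.comp_injective Nat.succ_injective
  have hTBeq : (1 - z) * TB = 1 - Bz := by
    have h1 : z * TB = ∑' k, z * Bbq k := by rw [hTBd, tsum_mul_left]
    have h2 : (∑' k, Bbq (k + 1)) - (∑' k, z * Bbq k) = - ∑' k, b (k + 1) * z ^ (k + 1) := by
      rw [← Summable.tsum_sub hSBbq1 (hSBbq.mul_left z), ← tsum_neg]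
      refine tsum_congr fun k => ?_
      rw [hBbq (k + 1), hBbq k, hBbrec k, pow_succ]
      ring
    have h3 : Bz = ∑' k, b (k + 1) * z ^ (k + 1) := by
      rw [← hBzt, Summable.tsum_eq_zero_add hSbq, hbq 0, hb0, zero_mul, zero_add]
      exact tsum_congr fun k => hbq (k + 1)
    have h4 : (1 - z) * TB = TB - z * TB := by ring
    rw [h4, h1, hTBsplit, h3]
    linarith [h2]
  have hTBle : TB ≤ EB := by
    have hBzsum : HasSum (fun i => b i * z ^ i) Bz := by
      rw [hBzd]
      exact (hmulz b hbnn hb1.summable).hasSum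
    have hA : HasSum (fun i => b i - b i * z ^ i) (1 - Bz) := hb1.sub hBzsum
    have hB : HasSum (fun i : ℕ => (i : ℝ) * b i * (1 - z)) (EB * (1 - z)) := hEB.mul_right (1 - z)
    have hle : (1:ℝ) - Bz ≤ EB * (1 - z) := by
      refine hasSum_le (fun i => ?_) hA hB
      have h1 := one_sub_pow_le' z hz0' hzle i
      nlinarith [hbnn i]
    nlinarith [hTBeq]
  -- the truncated tail sequence
  obtain ⟨Bbq', hBbq'⟩ : ∃ f : ℕ → ℝ, ∀ k, f k = (if k = 0 then 0 else Bb k) * z ^ k :=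
    ⟨_, fun _ => rfl⟩
  have hBbq'nn : ∀ k, 0 ≤ Bbq' k := by
    intro k
    rw [hBbq' k]
    refine mul_nonneg ?_ (pow_nonneg hz0' k)
    split <;> [exact le_rfl; exact hBbnn k]
  have hBbq'le : ∀ k, Bbq' k ≤ Bbq k := by
    intro k
    rw [hBbq' k, hBbq k]
    refine mul_le_mul_of_nonneg_right ?_ (pow_nonneg hz0' k)
    split <;> [exact hBbnn k; exact le_rfl]
  have hSBbq' : Summable Bbq' := Summable.of_nonneg_of_le hBbq'nn hBbq'le hSBbq
  have hTB' : (∑' k, Bbq' k) = TB - 1 := by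
    have h2 : (∑' k, Bbq' k) = Bbq' 0 + ∑' k, Bbq' (k + 1) := Summable.tsum_eq_zero_add hSBbq'
    have h0 : Bbq' 0 = 0 := by rw [hBbq' 0]; simp
    have h3 : (∑' k, Bbq' (k + 1)) = ∑' k, Bbq (k + 1) :=
      tsum_congr fun k => by rw [hBbq' (k + 1), hBbq (k + 1), if_neg (Nat.succ_ne_zero k)]
    rw [h2, h0, zero_add, h3]
    linarith [hTBsplit]
  -- the inner convolution
  obtain ⟨v, hv⟩ : ∃ f : ℕ → ℝ, ∀ k, f k = ∑ i ∈ Finset.range (k + 1), q i * Bbq (k - i) :=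
    ⟨_, fun _ => rfl⟩
  have hvnn : ∀ k, 0 ≤ v k := by
    intro k
    rw [hv k]
    exact Finset.sum_nonneg fun i _ => mul_nonneg (hqnn i) (hBbqnn _)
  have hkey : ∀ s k : ℕ, s ≤ k → z ^ k = z ^ s * z ^ (k - s) := by
    intro s k h
    rw [← pow_add, Nat.add_sub_cancel' h]
  -- the central coefficient identity
  have hcentral : ∀ j, q j =
      (1 / ET) * (∑ k ∈ Finset.range (j + 1), bq k * aq (j - k))
      + ((1 / ET) * (∑ k ∈ Finset.range (j + 1), Bbq' k * aq (j - k))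
        + lam * (∑ k ∈ Finset.range (j + 1), v k * aq (j - k))) := by
    intro j
    rcases Nat.eq_zero_or_pos j with hj | hj
    · subst hj
      have h1 : bq 0 = 0 := by rw [hbq 0, hb0, zero_mul]
      have h2 : Bbq' 0 = 0 := by rw [hBbq' 0]; simp
      have h3 : v 0 = 0 := by rw [hv 0]; simp [hq0]
      simp [Finset.sum_range_one, hq0, h1, h2, h3]
    · have hr := hrec j hj
      have e1 : (∑ s ∈ Finset.Icc 1 j, b s * a (j - s)) * z ^ j
          = ∑ k ∈ Finset.range (j + 1), bq k * aq (j - k) := by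
        rw [sum_range_succ_eq_icc (fun k => bq k * aq (j - k)) j
          (by show bq 0 * aq (j - 0) = 0; rw [hbq 0, hb0, zero_mul, zero_mul]), Finset.sum_mul]
        refine Finset.sum_congr rfl fun s hs => ?_
        obtain ⟨h1, h2⟩ := Finset.mem_Icc.mp hs
        rw [hbq s, haq (j - s), hkey s j h2]
        ring
      have e2 : ∀ k, 1 ≤ k → k ≤ j →
          a (j - k) * ((∑' i : ℕ, b (i + k + 1)) / ET
            + lam * ∑ i ∈ Finset.Icc 1 k, p i * (∑' m : ℕ, b (m + (k - i) + 1))) * z ^ j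
          = (1 / ET) * (Bbq' k * aq (j - k)) + lam * (v k * aq (j - k)) := by
        intro k hk1 hk2
        have hin : (∑ i ∈ Finset.Icc 1 k, p i * (∑' m : ℕ, b (m + (k - i) + 1))) * z ^ k
            = v k := by
          rw [hv k, sum_range_succ_eq_icc (fun i => q i * Bbq (k - i)) k
            (by show q 0 * Bbq (k - 0) = 0; rw [hq0, zero_mul]), Finset.sum_mul]
          refine Finset.sum_congr rfl fun i hi => ?_
          obtain ⟨hi1, hi2⟩ := Finset.mem_Icc.mp hi
          rw [hq i, hBbq (k - i), ← hBb (k - i), hkey i k hi2]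
          ring
        have hBbqk : Bbq' k = Bb k * z ^ k := by
          rw [hBbq' k, if_neg (by omega)]
        rw [haq (j - k), hBbqk, ← hin, ← hBb k, hkey k j hk2]
        ring
      have e2' : (∑ k ∈ Finset.Icc 1 j, a (j - k) *
            ((∑' i : ℕ, b (i + k + 1)) / ET
              + lam * ∑ i ∈ Finset.Icc 1 k, p i * (∑' m : ℕ, b (m + (k - i) + 1)))) * z ^ j
          = (1 / ET) * (∑ k ∈ Finset.range (j + 1), Bbq' k * aq (j - k))
            + lam * (∑ k ∈ Finset.range (j + 1), v k * aq (j - k)) := by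
        rw [sum_range_succ_eq_icc (fun k => Bbq' k * aq (j - k)) j
            (by show Bbq' 0 * aq (j - 0) = 0; rw [hBbq' 0]; simp),
          sum_range_succ_eq_icc (fun k => v k * aq (j - k)) j
            (by show v 0 * aq (j - 0) = 0
                rw [hv 0, Finset.sum_range_one, hq0, zero_mul, zero_mul]),
          Finset.mul_sum, Finset.mul_sum, ← Finset.sum_add_distrib, Finset.sum_mul]
        refine Finset.sum_congr rfl fun k hk => ?_
        obtain ⟨hk1, hk2⟩ := Finset.mem_Icc.mp hk
        exact e2 k hk1 hk2
      rw [hq j, hr, add_mul, mul_assoc, e1, e2']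
  -- summability of q via uniformly bounded partial sums
  have hQbound : ∀ N, ∑ j ∈ Finset.range N, q j
      ≤ ES * (1 + EB) / (ET * (1 - lam * ES * EB)) := by
    intro N
    have hQnn : 0 ≤ ∑ j ∈ Finset.range N, q j := Finset.sum_nonneg fun j _ => hqnn j
    have h1 := conv_partial_le_s4 bq aq hbqnn haqnn hSaq N
    have h2 := conv_partial_le_s4 Bbq' aq hBbq'nn haqnn hSaq N
    have h3 := conv_partial_le_s4 v aq hvnn haqnn hSaq N
    have h4 := conv_partial_le_s4 q Bbq hqnn hBbqnn hSBbq N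
    rw [hAzt] at h1 h2 h3
    rw [← hTBd] at h4
    have hbqpart : ∑ k ∈ Finset.range N, bq k ≤ 1 := by
      calc ∑ k ∈ Finset.range N, bq k ≤ ∑' k, bq k :=
            Summable.sum_le_tsum _ (fun i _ => hbqnn i) hSbq
        _ = Bz := hBzt
        _ ≤ 1 := hBzle
    have hBbq'part : ∑ k ∈ Finset.range N, Bbq' k ≤ EB := by
      calc ∑ k ∈ Finset.range N, Bbq' k ≤ ∑' k, Bbq' k :=
            Summable.sum_le_tsum _ (fun i _ => hBbq'nn i) hSBbq'
        _ = TB - 1 := hTB'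
        _ ≤ EB := by linarith [hTBle]
    have hvpart : ∑ k ∈ Finset.range N, v k ≤ (∑ j ∈ Finset.range N, q j) * TB := by
      calc ∑ k ∈ Finset.range N, v k
          = ∑ k ∈ Finset.range N, ∑ i ∈ Finset.range (k + 1), q i * Bbq (k - i) :=
            Finset.sum_congr rfl fun k _ => hv k
        _ ≤ (∑ j ∈ Finset.range N, q j) * TB := h4
    have hQ : ∑ j ∈ Finset.range N, q j
        ≤ (1 / ET) * (1 * ES) + ((1 / ET) * (EB * ES)
          + lam * (((∑ j ∈ Finset.range N, q j) * TB) * ES)) := by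
      calc ∑ j ∈ Finset.range N, q j
          = ∑ j ∈ Finset.range N,
              ((1 / ET) * (∑ k ∈ Finset.range (j + 1), bq k * aq (j - k))
              + ((1 / ET) * (∑ k ∈ Finset.range (j + 1), Bbq' k * aq (j - k))
                + lam * (∑ k ∈ Finset.range (j + 1), v k * aq (j - k)))) :=
            Finset.sum_congr rfl fun j _ => hcentral j
        _ = (1 / ET) * (∑ j ∈ Finset.range N, ∑ k ∈ Finset.range (j + 1), bq k * aq (j - k))
            + ((1 / ET) * (∑ j ∈ Finset.range N, ∑ k ∈ Finset.range (j + 1), Bbq' k * aq (j - k))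
              + lam * (∑ j ∈ Finset.range N, ∑ k ∈ Finset.range (j + 1), v k * aq (j - k))) := by
            rw [Finset.sum_add_distrib, Finset.sum_add_distrib, Finset.mul_sum, Finset.mul_sum,
              Finset.mul_sum]
        _ ≤ (1 / ET) * (1 * ES) + ((1 / ET) * (EB * ES)
            + lam * (((∑ j ∈ Finset.range N, q j) * TB) * ES)) := by
            have hET' : (0:ℝ) ≤ 1 / ET := by positivity
            have nn1 : (0:ℝ) ≤ ∑ k ∈ Finset.range N, bq k :=
              Finset.sum_nonneg fun i _ => hbqnn i
            have nn2 : (0:ℝ) ≤ ∑ k ∈ Finset.range N, Bbq' k :=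
              Finset.sum_nonneg fun i _ => hBbq'nn i
            have nn3 : (0:ℝ) ≤ ∑ k ∈ Finset.range N, v k :=
              Finset.sum_nonneg fun i _ => hvnn i
            have c1 : ∑ j ∈ Finset.range N, ∑ k ∈ Finset.range (j + 1), bq k * aq (j - k)
                ≤ 1 * ES := le_trans h1 (mul_le_mul hbqpart hAzle hAznn zero_le_one)
            have c2 : ∑ j ∈ Finset.range N, ∑ k ∈ Finset.range (j + 1), Bbq' k * aq (j - k)
                ≤ EB * ES := le_trans h2 (mul_le_mul hBbq'part hAzle hAznn hEBnn)
            have c3 : ∑ j ∈ Finset.range N, ∑ k ∈ Finset.range (j + 1), v k * aq (j - k)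
                ≤ ((∑ j ∈ Finset.range N, q j) * TB) * ES :=
              le_trans h3 (mul_le_mul hvpart hAzle hAznn (mul_nonneg hQnn hTBnn))
            exact add_le_add (mul_le_mul_of_nonneg_left c1 hET')
              (add_le_add (mul_le_mul_of_nonneg_left c2 hET')
                (mul_le_mul_of_nonneg_left c3 hlam.le))
    rw [le_div_iff₀ (mul_pos hET (by linarith : (0:ℝ) < 1 - lam * ES * EB))]
    have hfin : lam * (((∑ j ∈ Finset.range N, q j) * TB) * ES)
        ≤ lam * ES * EB * (∑ j ∈ Finset.range N, q j) := by
      have t1 : (∑ j ∈ Finset.range N, q j) * TB ≤ (∑ j ∈ Finset.range N, q j) * EB :=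
        mul_le_mul_of_nonneg_left hTBle hQnn
      have t2 : ((∑ j ∈ Finset.range N, q j) * TB) * ES
          ≤ ((∑ j ∈ Finset.range N, q j) * EB) * ES := mul_le_mul_of_nonneg_right t1 hESnn
      calc lam * (((∑ j ∈ Finset.range N, q j) * TB) * ES)
          ≤ lam * (((∑ j ∈ Finset.range N, q j) * EB) * ES) :=
            mul_le_mul_of_nonneg_left t2 hlam.le
        _ = lam * ES * EB * (∑ j ∈ Finset.range N, q j) := by ring
    have hET0 : ET ≠ 0 := ne_of_gt hET
    have hQ' : ET * (∑ j ∈ Finset.range N, q j)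
        ≤ ES + EB * ES + ET * (lam * (((∑ j ∈ Finset.range N, q j) * TB) * ES)) := by
      calc ET * (∑ j ∈ Finset.range N, q j)
          ≤ ET * ((1 / ET) * (1 * ES) + ((1 / ET) * (EB * ES)
            + lam * (((∑ j ∈ Finset.range N, q j) * TB) * ES))) :=
            mul_le_mul_of_nonneg_left hQ hET.le
        _ = ES + EB * ES + ET * (lam * (((∑ j ∈ Finset.range N, q j) * TB) * ES)) := by
            field_simp
            ring
    linarith [hQ', mul_le_mul_of_nonneg_left hfin hET.le]
  have hSq : Summable q := summable_of_sum_range_le hqnn hQbound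
  -- evaluate the generating function
  obtain ⟨G, hGd⟩ : ∃ g : ℝ, g = ∑' n, q n := ⟨_, rfl⟩
  have hc1 : HasSum (fun j => ∑ k ∈ Finset.range (j + 1), bq k * aq (j - k)) (Bz * Az) := by
    have := hasSum_conv hSbq hSaq
    rwa [hBzt, hAzt] at this
  have hc2 : HasSum (fun j => ∑ k ∈ Finset.range (j + 1), Bbq' k * aq (j - k)) ((TB - 1) * Az) := by
    have := hasSum_conv hSBbq' hSaq
    rwa [hTB', hAzt] at this
  have hvsum : HasSum v (G * TB) := by
    have h := (hasSum_conv hSq hSBbq).summable.hasSum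
    have e : (fun j => ∑ k ∈ Finset.range (j + 1), q k * Bbq (j - k)) = v :=
      funext fun k => (hv k).symm
    have h2 : (∑' j, ∑ k ∈ Finset.range (j + 1), q k * Bbq (j - k)) = G * TB := by
      rw [hGd, hTBd, (hasSum_conv hSq hSBbq).tsum_eq]
    rw [e] at h h2
    rwa [h2] at h
  have hc3 : HasSum (fun j => ∑ k ∈ Finset.range (j + 1), v k * aq (j - k)) ((G * TB) * Az) := by
    have := hasSum_conv hvsum.summable hSaq
    rwa [hvsum.tsum_eq, hAzt] at this
  have hGsum : HasSum q ((1 / ET) * (Bz * Az)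
      + ((1 / ET) * ((TB - 1) * Az) + lam * ((G * TB) * Az))) := by
    have h := (hc1.mul_left (1 / ET)).add ((hc2.mul_left (1 / ET)).add (hc3.mul_left lam))
    have e : q = fun j =>
        (1 / ET) * (∑ k ∈ Finset.range (j + 1), bq k * aq (j - k))
        + ((1 / ET) * (∑ k ∈ Finset.range (j + 1), Bbq' k * aq (j - k))
          + lam * (∑ k ∈ Finset.range (j + 1), v k * aq (j - k))) := funext fun j => hcentral j
    rw [e]
    exact h
  have hGeq : G = (1 / ET) * (Bz * Az)
      + ((1 / ET) * ((TB - 1) * Az) + lam * ((G * TB) * Az)) := by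
    have h := hGsum.tsum_eq
    rw [← hGd] at h
    exact h
  have hET0 : ET ≠ 0 := ne_of_gt hET
  have hinv : ET * (1 / ET) = 1 := by field_simp
  have hkeyG : G * (1 - lam * Az * TB) = Az * z * TB / ET := by
    have hBzv : Bz = 1 - (1 - z) * TB := by linarith [hTBeq]
    rw [hBzv] at hGeq
    rw [eq_div_iff hET0]
    linear_combination ET * hGeq + ((1 - (1 - z) * TB) * Az + (TB - 1) * Az) * hinv
  -- positivity of the denominator
  have hAzTB : Az * TB ≤ ES * EB := mul_le_mul hAzle hTBle hTBnn hESnn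
  have hD : 0 < 1 - lam * Az * TB := by nlinarith [mul_le_mul_of_nonneg_left hAzTB hlam.le]
  -- rewrite the goal
  have hGoalL : (∑' j : ℕ, p j * z ^ j) = G := by
    rw [hGd]
    exact tsum_congr fun j => (hq j).symm
  have hBzsub : (1 : ℝ) - Bz = (1 - z) * TB := by linarith [hTBeq]
  rw [hGoalL, hBzsub]
  have hne1 : (1:ℝ) - lam * ES * EB ≠ 0 := by linarith [hρ1]
  have hne2 : (1:ℝ) - lam * Az * TB ≠ 0 := ne_of_gt hD
  have hz1'' : (1:ℝ) - z ≠ 0 := ne_of_gt hz1'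
  have hGval : G = Az * z * TB / (ET * (1 - lam * Az * TB)) := by
    rw [eq_div_iff (mul_ne_zero hET0 hne2)]
    linear_combination ET * hkeyG + (Az * z * TB) * hinv
  rw [hGval, div_cancel_aux (lam * Az) (1 - z) TB hz1'',
    div_cancel_aux2 (1 - z) TB EB hz1'' (ne_of_gt hEB0)]
  exact final_algebra lam ET ES EB Az TB z G hET0 (ne_of_gt hES0) (ne_of_gt hEB0)
    (ne_of_gt hlam) hne1 hne2
end
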